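/- arXiv:2207.00252 — 6 statements merged into one kernel-verified Lean document; each statement's English description precedes it below -/
import Mathlib

section
/- If f(t,ε) satisfies the Riccati equation ε f'(t) = λ(t)(1 - f(t)²) + ε λ(t)⁻¹ λ'(t) f(t) with f(t,0) = 1, where λ(t) = i√(μ(t)) and μ(t) > 0, then the change of variables x = f u + f̄ v, y = λ u - λ v transforms the system ε x' = y, ε y' = -μ(t) x into the diagonal system ε u' = ν u, ε v' = ν̄ v with ν(t,ε) = λ(t) f(t,ε) - ε λ(t)⁻¹ λ'(t). -/
/-!
Since `λ` is purely imaginary, so is `λ'`, hence `λ⁻¹ λ'` is real and conjugating the Riccati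
equation shows that `f̄` solves the same equation with `λ` replaced by `-λ`, while
`ν̄ = -λ f̄ - ε λ⁻¹ λ'`.
Substituting `ε u' = ν u`, `ε v' = ν̄ v` and the two Riccati equations into the product rule for
`x = f u + f̄ v` and `y = λ (u - v)`, every term except `λ u - λ v`, resp. `λ² (f u + f̄ v)`,
cancels, and `λ² = -μ`.
-/

open Complex ComplexConjugate

theorem conj_deriv_eq_neg_of_conj_eq_neg {g : ℝ → ℂ} (hg : ∀ s, conj (g s) = -g s) (t : ℝ) :
    conj (deriv g t) = -deriv g t := by
  have hstar : (fun s => star (g s)) = -g := funext hg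
  rw [starRingEnd_apply, ← deriv.star, hstar, deriv.neg']

theorem I_mul_sqrt_sq {r : ℝ} (hr : 0 ≤ r) : (I * √r) ^ 2 = -(r : ℂ) := by
  rw [mul_pow, I_sq, ← ofReal_pow, Real.sq_sqrt hr, neg_one_mul]

theorem I_mul_sqrt_ne_zero {r : ℝ} (hr : 0 < r) : I * √r ≠ 0 :=
  mul_ne_zero I_ne_zero (ofReal_ne_zero.mpr (Real.sqrt_pos.mpr hr).ne')

section Diagonalization

variable {ε : ℝ} {L L' F F' U U' V V' N : ℂ}

theorem riccati_conj (hL : conj L = -L) (hL' : conj L' = -L')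
    (hF : ε * F' = L * (1 - F ^ 2) + ε * L⁻¹ * L' * F) :
    ε * conj F' = -L * (1 - conj F ^ 2) + ε * L⁻¹ * L' * conj F := by
  have := congrArg conj hF
  simp only [map_add, map_mul, map_sub, map_pow, map_one, map_inv₀, conj_ofReal, hL, hL']
    at this
  rw [this, inv_neg]
  ring

theorem conj_eq_of_eq_mul_sub (hL : conj L = -L) (hL' : conj L' = -L')
    (hN : N = L * F - ε * L⁻¹ * L') : conj N = -L * conj F - ε * L⁻¹ * L' := by
  rw [hN]
  simp only [map_sub, map_mul, map_inv₀, conj_ofReal, hL, hL', inv_neg]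
  ring

theorem changeOfVariables_fst_eq (hL : conj L = -L) (hL' : conj L' = -L')
    (hF : ε * F' = L * (1 - F ^ 2) + ε * L⁻¹ * L' * F)
    (hN : N = L * F - ε * L⁻¹ * L') (hU : ε * U' = N * U) (hV : ε * V' = conj N * V) :
    ε * (F' * U + F * U' + (conj F' * V + conj F * V')) = L * U - L * V := by
  rw [conj_eq_of_eq_mul_sub hL hL' hN] at hV
  rw [hN] at hU
  linear_combination U * hF + V * riccati_conj hL hL' hF + F * hU + conj F * hV

theorem changeOfVariables_snd_eq {m : ℝ} (hL : conj L = -L) (hL' : conj L' = -L')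
    (hL0 : L ≠ 0) (hL2 : L ^ 2 = -m)
    (hN : N = L * F - ε * L⁻¹ * L') (hU : ε * U' = N * U) (hV : ε * V' = conj N * V) :
    ε * ((L' * U + L * U') - (L' * V + L * V')) = -m * (F * U + conj F * V) := by
  rw [conj_eq_of_eq_mul_sub hL hL' hN] at hV
  rw [hN] at hU
  linear_combination L * hU - L * hV + (U * F + V * conj F) * hL2
    - (ε * L' * U - ε * L' * V) * mul_inv_cancel₀ hL0

end Diagonalization

theorem stmt_0_general (μ : ℝ → ℝ) (lam f u v ν : ℝ → ℂ) (ε : ℝ)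
    (hμpos : ∀ t, 0 < μ t) (hμ : Differentiable ℝ μ)
    (hlam : ∀ t, lam t = Complex.I * Real.sqrt (μ t))
    (hf : Differentiable ℝ f)
    (hric : ∀ t, (ε : ℂ) * deriv f t
      = lam t * (1 - f t ^ 2) + (ε : ℂ) * (lam t)⁻¹ * deriv lam t * f t)
    (hν : ∀ t, ν t = lam t * f t - (ε : ℂ) * (lam t)⁻¹ * deriv lam t)
    (hu : Differentiable ℝ u) (hv : Differentiable ℝ v)
    (hueq : ∀ t, (ε : ℂ) * deriv u t = ν t * u t)
    (hveq : ∀ t, (ε : ℂ) * deriv v t = (starRingEnd ℂ) (ν t) * v t) :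
    ∀ t : ℝ,
      (ε : ℂ) * deriv (fun s => f s * u s + (starRingEnd ℂ) (f s) * v s) t
        = lam t * u t - lam t * v t ∧
      (ε : ℂ) * deriv (fun s => lam s * u s - lam s * v s) t
        = -(μ t : ℂ) * (f t * u t + (starRingEnd ℂ) (f t) * v t) := by
  have hlamD : Differentiable ℝ lam := by
    rw [funext hlam]
    exact fun t =>
      ((((hμ t).hasDerivAt.sqrt (hμpos t).ne').ofReal_comp).const_mul I).differentiableAt
  have hconj : ∀ s, conj (lam s) = -lam s := fun s => by simp [hlam]
  have hconj' := conj_deriv_eq_neg_of_conj_eq_neg hconj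
  intro t
  have hL0 : lam t ≠ 0 := hlam t ▸ I_mul_sqrt_ne_zero (hμpos t)
  have hL2 : lam t ^ 2 = -(μ t : ℂ) := hlam t ▸ I_mul_sqrt_sq (hμpos t).le
  have hf' := (hf t).hasDerivAt
  have hu' := (hu t).hasDerivAt
  have hv' := (hv t).hasDerivAt
  have hlam' := (hlamD t).hasDerivAt
  have hx : HasDerivAt (fun s => f s * u s + conj (f s) * v s)
      (deriv f t * u t + f t * deriv u t + (conj (deriv f t) * v t + conj (f t) * deriv v t)) t :=
    (hf'.mul hu').add (hf'.star.mul hv')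
  have hy : HasDerivAt (fun s => lam s * u s - lam s * v s)
      (deriv lam t * u t + lam t * deriv u t - (deriv lam t * v t + lam t * deriv v t)) t :=
    (hlam'.mul hu').sub (hlam'.mul hv')
  constructor
  · rw [hx.deriv]
    exact changeOfVariables_fst_eq (hconj t) (hconj' t) (hric t) (hν t) (hueq t) (hveq t)
  · rw [hy.deriv]
    exact changeOfVariables_snd_eq (hconj t) (hconj' t) hL0 hL2 (hν t) (hueq t) (hveq t)

/-- If `f` satisfies the Riccati equation
`ε f' = λ (1 - f²) + ε λ⁻¹ λ' f` where `λ(t) = i √(μ t)` with `μ > 0`, then the change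
of variables `x = f u + conj f · v`, `y = λ u - λ v` transforms the system
`ε x' = y`, `ε y' = -μ x` into the diagonal system `ε u' = ν u`, `ε v' = conj ν · v`
with `ν = λ f - ε λ⁻¹ λ'`. -/
theorem stmt_0 (μ : ℝ → ℝ) (lam f u v ν : ℝ → ℂ) (ε : ℝ) (hε : 0 < ε)
    (hμpos : ∀ t, 0 < μ t) (hμ : Differentiable ℝ μ)
    (hlam : ∀ t, lam t = Complex.I * Real.sqrt (μ t))
    (hf : Differentiable ℝ f)
    (hfne : ∀ t, f t + (starRingEnd ℂ) (f t) ≠ 0)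
    (hric : ∀ t, (ε : ℂ) * deriv f t
      = lam t * (1 - f t ^ 2) + (ε : ℂ) * (lam t)⁻¹ * deriv lam t * f t)
    (hν : ∀ t, ν t = lam t * f t - (ε : ℂ) * (lam t)⁻¹ * deriv lam t)
    (hu : Differentiable ℝ u) (hv : Differentiable ℝ v)
    (hueq : ∀ t, (ε : ℂ) * deriv u t = ν t * u t)
    (hveq : ∀ t, (ε : ℂ) * deriv v t = (starRingEnd ℂ) (ν t) * v t) :
    ∀ t : ℝ,
      (ε : ℂ) * deriv (fun s => f s * u s + (starRingEnd ℂ) (f s) * v s) t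
        = lam t * u t - lam t * v t ∧
      (ε : ℂ) * deriv (fun s => lam s * u s - lam s * v s) t
        = -(μ t : ℂ) * (f t * u t + (starRingEnd ℂ) (f t) * v t) :=
  stmt_0_general μ lam f u v ν ε hμpos hμ hlam hf hric hν hu hv hueq hveq
end

section
/- Any solution on the unstable slow manifold of ẋ = y, ẏ = -μ(t)x, ṫ = ε (with μ < 0 on I₋) through a point (x₀, h_u(t₀,ε)x₀, t₀) satisfies x(t) = (μ(t₀)/μ(t))^{1/4} exp(ε⁻¹ ∫_{t₀}^t √(-μ(s)) ds) (1 + O(ε)) x₀ for t ∈ I₋. -/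
/-!
With the WKB phase `ψ(t) = ε⁻¹ ∫_{t₀}^t √(-μ) - ¼ log (μ t / μ t₀)`, whose derivative is the part
`ε⁻¹ √(-μ) - μ' / (4μ)` of `ε⁻¹ h_u`, the ansatz `x = exp ψ · g` leaves `g' = ε U₂ g`.
As `|ε U₂| ≤ ε M`, Grönwall's inequality gives `|g t - g t₀| ≤ |g t₀| (exp (ε M |t - t₀|) - 1)`,
which is `O(ε) |g t₀|` uniformly on `[a, b]`; and `exp ψ` is exactly `(μ t₀/μ t)^{1/4} exp(ε⁻¹∫√(-μ))`.
-/

open Set Real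

section Gronwall

variable {E : Type*} [NormedAddCommGroup E] [NormedSpace ℝ E]

theorem gronwallBound_zero_mul (K δ x : ℝ) :
    gronwallBound 0 K (K * δ) x = δ * (exp (K * x) - 1) := by
  rcases eq_or_ne K 0 with rfl | hK
  · simp [gronwallBound_K0]
  · rw [gronwallBound_of_K_ne_0 hK]
    field_simp
    ring

theorem norm_sub_le_of_norm_deriv_le_mul_norm_right {f f' : ℝ → E} {K a b : ℝ} (hK : 0 ≤ K)
    (hf : ∀ s ∈ Icc a b, HasDerivAt f (f' s) s)
    (bound : ∀ s ∈ Icc a b, ‖f' s‖ ≤ K * ‖f s‖) :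
    ∀ t ∈ Icc a b, ‖f t - f a‖ ≤ ‖f a‖ * (exp (K * (t - a)) - 1) := by
  intro t ht
  rw [← gronwallBound_zero_mul]
  refine norm_le_gronwallBound_of_norm_deriv_right_le (f' := f')
    (fun s hs => ((hf s hs).sub_const (f a)).continuousAt.continuousWithinAt)
    (fun s hs => ((hf s (Ico_subset_Icc_self hs)).sub_const (f a)).hasDerivWithinAt)
    (by simp) (fun s hs => ?_) t ht
  calc ‖f' s‖ ≤ K * ‖f s‖ := bound s (Ico_subset_Icc_self hs)
    _ ≤ K * (‖f s - f a‖ + ‖f a‖) := by gcongr; exact norm_le_norm_sub_add _ _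
    _ = K * ‖f s - f a‖ + K * ‖f a‖ := by ring

theorem norm_sub_le_of_norm_deriv_le_mul_norm {f f' : ℝ → E} {K a b : ℝ} (hK : 0 ≤ K)
    (hf : ∀ s ∈ Icc a b, HasDerivAt f (f' s) s)
    (bound : ∀ s ∈ Icc a b, ‖f' s‖ ≤ K * ‖f s‖) {t₀ t : ℝ} (ht₀ : t₀ ∈ Icc a b)
    (ht : t ∈ Icc a b) :
    ‖f t - f t₀‖ ≤ ‖f t₀‖ * (exp (K * |t - t₀|) - 1) := by
  rcases le_total t₀ t with hle | hle
  · rw [abs_of_nonneg (sub_nonneg.2 hle)]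
    have hsub : Icc t₀ b ⊆ Icc a b := Icc_subset_Icc_left ht₀.1
    exact norm_sub_le_of_norm_deriv_le_mul_norm_right hK (fun s hs => hf s (hsub hs))
      (fun s hs => bound s (hsub hs)) t ⟨hle, ht.2⟩
  · have hsub : ∀ s ∈ Icc (-t₀) (-a), -s ∈ Icc a b := fun s hs =>
      ⟨le_neg_of_le_neg hs.2, (neg_le.1 hs.1).trans ht₀.2⟩
    have hrev := norm_sub_le_of_norm_deriv_le_mul_norm_right (f := fun s => f (-s))
      (f' := fun s => -f' (-s)) hK
      (fun s hs => by
        simpa [Function.comp_def] using (hf (-s) (hsub s hs)).scomp s (hasDerivAt_neg' s))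
      (fun s hs => by simpa using bound (-s) (hsub s hs)) (-t) ⟨neg_le_neg hle, neg_le_neg ht.1⟩
    rw [abs_of_nonpos (sub_nonpos.2 hle)]
    simpa [neg_neg, add_comm, sub_eq_add_neg] using hrev

end Gronwall

theorem exp_sub_one_le_mul_exp (x : ℝ) : exp x - 1 ≤ x * exp x := by
  have h := mul_le_mul_of_nonneg_right (add_one_le_exp (-x)) (exp_pos x).le
  rw [← exp_add, neg_add_cancel, exp_zero] at h
  linarith

theorem exp_mul_sub_one_le {ε L : ℝ} (hε : 0 ≤ ε) (hε1 : ε ≤ 1) (hL : 0 ≤ L) :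
    exp (ε * L) - 1 ≤ ε * (L * exp L) :=
  calc exp (ε * L) - 1 ≤ ε * L * exp (ε * L) := exp_sub_one_le_mul_exp _
    _ ≤ ε * L * exp L := by gcongr; nlinarith
    _ = ε * (L * exp L) := by ring

theorem exists_eq_one_add_mul_of_abs_sub_le {u v δ : ℝ} (hδ : 0 ≤ δ) (h : |v - u| ≤ |u| * δ) :
    ∃ R, |R| ≤ δ ∧ v = (1 + R) * u := by
  rcases eq_or_ne u 0 with rfl | hu
  · exact ⟨0, by simpa using hδ, by simpa using h⟩
  · refine ⟨(v - u) / u, ?_, by field_simp; ring⟩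
    rwa [abs_div, div_le_iff₀ (abs_pos.2 hu), mul_comm]

/-- The logarithm of the WKB factor `(μ t₀ / μ t) ^ (1/4) * exp (ε⁻¹ ∫_{t₀}^t √(-μ))`
(`exp_wkbPhase`), in a form that differentiates without `rpow`. -/
noncomputable def wkbPhase (μ : ℝ → ℝ) (ε t₀ t : ℝ) : ℝ :=
  (1 / 4) * (log (-μ t₀) - log (-μ t)) + ε⁻¹ * ∫ s in t₀..t, √(-μ s)

theorem wkbPhase_self (μ : ℝ → ℝ) (ε t₀ : ℝ) : wkbPhase μ ε t₀ t₀ = 0 := by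
  simp [wkbPhase]

theorem exp_wkbPhase {μ : ℝ → ℝ} {t₀ t : ℝ} (ht₀ : μ t₀ < 0) (ht : μ t < 0) (ε : ℝ) :
    exp (wkbPhase μ ε t₀ t)
      = (μ t₀ / μ t) ^ ((1:ℝ) / 4) * exp (ε⁻¹ * ∫ s in t₀..t, √(-μ s)) := by
  have hdiv : μ t₀ / μ t = -μ t₀ / -μ t := (neg_div_neg_eq _ _).symm
  rw [rpow_def_of_pos (div_pos_of_neg_of_neg ht₀ ht), ← exp_add, hdiv,
    log_div (neg_ne_zero.2 ht₀.ne) (neg_ne_zero.2 ht.ne), wkbPhase]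
  congr 1
  ring

theorem hasDerivAt_wkbPhase {μ : ℝ → ℝ} {μ' t : ℝ} (hμ : Continuous μ) (hμt : HasDerivAt μ μ' t)
    (ht : μ t ≠ 0) (ε t₀ : ℝ) :
    HasDerivAt (wkbPhase μ ε t₀) (-(1 / 4) * μ' / μ t + ε⁻¹ * √(-μ t)) t := by
  have hsqrt : Continuous fun s => √(-μ s) := hμ.neg.sqrt
  have hlog := hμt.neg.log (neg_ne_zero.2 ht)
  have hint := hsqrt.integral_hasStrictDerivAt t₀ t |>.hasDerivAt
  have h := (((hasDerivAt_const t (log (-μ t₀))).sub hlog).const_mul (1 / 4)).add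
    (hint.const_mul ε⁻¹)
  exact h.congr_deriv (by simp only [Pi.neg_apply]; field_simp; ring)

theorem hasDerivAt_mul_exp_neg {x ψ : ℝ → ℝ} {ψ' k t : ℝ} (hψ : HasDerivAt ψ ψ' t)
    (hx : HasDerivAt x ((ψ' + k) * x t) t) :
    HasDerivAt (fun s => x s * exp (-ψ s)) (k * (x t * exp (-ψ t))) t :=
  (hx.mul hψ.neg.exp).congr_deriv (by simp only [Pi.neg_apply]; ring)

/-- Any solution on the unstable slow manifold
`y = h_u(t,ε) x` (with `h_u(t,ε) = √(-μ(t)) - (1/4) μ(t)⁻¹ μ'(t) ε + ε² U₂(t,ε)`,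
`U₂` bounded), i.e. any solution of `dx/dt = ε⁻¹ h_u(t,ε) x`, through a point
`(x₀, h_u(t₀,ε) x₀, t₀)` satisfies
`x(t) = (μ(t₀)/μ(t))^{1/4} exp(ε⁻¹ ∫_{t₀}^t √(-μ(s)) ds) (1 + O(ε)) x₀` on `I₋ = [a,b]`. -/
theorem stmt_3 (a b : ℝ) (hab : a < b) (μ : ℝ → ℝ) (hμ : ContDiff ℝ 2 μ)
    (c : ℝ) (hc : 0 < c) (hneg : ∀ t ∈ Set.Icc a b, μ t ≤ -c)
    (U₂ : ℝ → ℝ → ℝ) (M : ℝ) (hM : 0 ≤ M)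
    (hU₂ : ∀ ε > (0:ℝ), ∀ t ∈ Set.Icc a b, |U₂ t ε| ≤ M) :
    ∃ C > 0, ∃ ε₀ > 0, ∀ ε ∈ Set.Ioc (0:ℝ) ε₀,
      ∀ x : ℝ → ℝ, ∀ t₀ ∈ Set.Icc a b,
        (∀ t ∈ Set.Icc a b,
          HasDerivAt x (ε⁻¹ * (Real.sqrt (-μ t) - (1/4) * (μ t)⁻¹ * deriv μ t * ε
            + ε ^ 2 * U₂ t ε) * x t) t) →
        ∀ t ∈ Set.Icc a b, ∃ R : ℝ, |R| ≤ C * ε ∧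
          x t = (μ t₀ / μ t) ^ ((1:ℝ)/4)
            * Real.exp (ε⁻¹ * ∫ s in t₀..t, Real.sqrt (-μ s)) * (1 + R) * x t₀ := by
  set L := M * (b - a)
  have hL : 0 ≤ L := mul_nonneg hM (sub_nonneg.2 hab.le)
  refine ⟨L * exp L + 1, by positivity, 1, one_pos, ?_⟩
  rintro ε ⟨hε, hε1⟩ x t₀ ht₀ hx t ht
  have hμ_neg : ∀ s ∈ Icc a b, μ s < 0 := fun s hs => by linarith [hneg s hs]
  have hμ_diff : Differentiable ℝ μ := hμ.differentiable (by norm_num)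
  set ψ := wkbPhase μ ε t₀
  set g := fun s => x s * exp (-ψ s)
  have hg : ∀ s ∈ Icc a b, HasDerivAt g (ε * U₂ s ε * g s) s := fun s hs =>
    hasDerivAt_mul_exp_neg
      (hasDerivAt_wkbPhase hμ_diff.continuous (hμ_diff s).hasDerivAt (hμ_neg s hs).ne ε t₀)
      (by convert hx s hs using 2; field_simp [(hμ_neg s hs).ne]; ring)
  have hg_bound : ∀ s ∈ Icc a b, ‖ε * U₂ s ε * g s‖ ≤ ε * M * ‖g s‖ := fun s hs => by
    rw [norm_mul, norm_mul, Real.norm_of_nonneg hε.le]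
    gcongr
    exact hU₂ ε hε s hs
  have hgrowth : exp (ε * M * |t - t₀|) - 1 ≤ (L * exp L + 1) * ε :=
    calc exp (ε * M * |t - t₀|) - 1 ≤ exp (ε * L) - 1 := by
          rw [show ε * L = ε * M * (b - a) by ring, ← Real.dist_eq]
          gcongr
          exact Real.dist_le_of_mem_Icc ht ht₀
      _ ≤ ε * (L * exp L) := exp_mul_sub_one_le hε.le hε1 hL
      _ ≤ (L * exp L + 1) * ε := by nlinarith
  obtain ⟨R, hR, hgt⟩ := exists_eq_one_add_mul_of_abs_sub_le (by positivity)
    ((norm_sub_le_of_norm_deriv_le_mul_norm (by positivity) hg hg_bound ht₀ ht).trans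
      (mul_le_mul_of_nonneg_left hgrowth (norm_nonneg _)))
  refine ⟨R, hR, ?_⟩
  have hgt₀ : g t₀ = x t₀ := by simp [g, ψ, wkbPhase_self]
  rw [← exp_wkbPhase (hμ_neg t₀ ht₀) (hμ_neg t ht), mul_assoc, ← hgt₀, ← hgt]
  simp only [g, ψ, mul_left_comm _ (x t), ← exp_add, add_neg_cancel, exp_zero, mul_one]
end

section
/- Suppose x_ℂ(ε₃) is a complex solution of the second-order equation obtained from ẋ = y₃, ẏ₃ = -x - (1/2)ε₃y₃, ε̇₃ = -(3/2)ε₃² that satisfies x_ℂ(ε₃) = ε₃^{1/6} exp(i(2/(3ε₃) - π/4))(1 + O(ε₃)) as ε₃ → 0⁺. Then x_ℂ(ε₃) = √π (Ai - iBi)(-ε₃^{-2/3}) for all sufficiently small ε₃ > 0. -/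
/-!
Put `θ = 2/(3ε) - π/4`. In the variable `ε` the functions `x`, `a = √π Ai(-ε^{-2/3})` and
`b = -√π Bi(-ε^{-2/3})` solve one linear equation `u'' + p u' + q u = 0`, and up to a relative
`O(ε)` they equal `ε^{1/6} e^{iθ}`, `ε^{1/6} cos θ` and `ε^{1/6} sin θ`. So `X = x - (a + i b)` is
a solution with `X = o(ε^{1/6})`.

For solutions the weighted Wronskians `W(u, v) = ε^{5/3} (u v' - u' v)` are constant, and any
three solutions satisfy `W(a, b) X + W(b, X) a + W(X, a) b = 0`. Along `ε → 0` with `θ ≡ 0`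
(mod `2π`) the term `a` dominates `b` and `X`, which forces `W(b, X) = 0`; along `θ ≡ π/2`
likewise `W(X, a) = 0`. Hence `W(X, x) = W(X, a) - i W(b, X) = 0`, so `X / x` is constant near
`0`, and it tends to `0`: thus `X = 0`.
-/

open Set Filter Topology Real

def IsSolOn (p q : ℝ → ℝ) (s : Set ℝ) (u du : ℝ → ℂ) : Prop :=
  ∀ t ∈ s, HasDerivAt u (du t) t ∧ HasDerivAt du (-((p t : ℂ) * du t + (q t : ℂ) * u t)) t

def wronskian (μ : ℝ → ℝ) (u du v dv : ℝ → ℂ) (t : ℝ) : ℂ :=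
  μ t * (u t * dv t - du t * v t)

namespace IsSolOn

variable {p q : ℝ → ℝ} {s : Set ℝ} {u du v dv : ℝ → ℂ}

lemma mono {s' : Set ℝ} (hu : IsSolOn p q s u du) (hs : s' ⊆ s) : IsSolOn p q s' u du :=
  fun t ht ↦ hu t (hs ht)

lemma add (hu : IsSolOn p q s u du) (hv : IsSolOn p q s v dv) :
    IsSolOn p q s (fun t ↦ u t + v t) (fun t ↦ du t + dv t) := by
  intro t ht
  obtain ⟨hu₁, hu₂⟩ := hu t ht
  obtain ⟨hv₁, hv₂⟩ := hv t ht
  exact ⟨hu₁.add hv₁, (hu₂.add hv₂).congr_deriv (by ring)⟩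

lemma const_mul (c : ℂ) (hu : IsSolOn p q s u du) :
    IsSolOn p q s (fun t ↦ c * u t) (fun t ↦ c * du t) := by
  intro t ht
  obtain ⟨hu₁, hu₂⟩ := hu t ht
  exact ⟨hu₁.const_mul c, (hu₂.const_mul c).congr_deriv (by ring)⟩

lemma sub (hu : IsSolOn p q s u du) (hv : IsSolOn p q s v dv) :
    IsSolOn p q s (fun t ↦ u t - v t) (fun t ↦ du t - dv t) := by
  simpa only [neg_one_mul, ← sub_eq_add_neg] using hu.add (hv.const_mul (-1))

lemma hasDerivAt_wronskian {μ : ℝ → ℝ} (hμ : ∀ t ∈ s, HasDerivAt μ (μ t * p t) t)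
    (hu : IsSolOn p q s u du) (hv : IsSolOn p q s v dv) {t : ℝ} (ht : t ∈ s) :
    HasDerivAt (wronskian μ u du v dv) 0 t := by
  obtain ⟨hu₁, hu₂⟩ := hu t ht
  obtain ⟨hv₁, hv₂⟩ := hv t ht
  refine ((hμ t ht).ofReal_comp.mul ((hu₁.mul hv₂).sub (hu₂.mul hv₁))).congr_deriv ?_
  simp only [Pi.mul_apply, Pi.sub_apply]
  push_cast
  ring

/-- Abel's identity. -/
lemma wronskian_eq {μ : ℝ → ℝ} (hs : IsOpen s) (hs' : IsPreconnected s)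
    (hμ : ∀ t ∈ s, HasDerivAt μ (μ t * p t) t)
    (hu : IsSolOn p q s u du) (hv : IsSolOn p q s v dv) {t₁ t₂ : ℝ} (ht₁ : t₁ ∈ s)
    (ht₂ : t₂ ∈ s) : wronskian μ u du v dv t₁ = wronskian μ u du v dv t₂ :=
  hs.is_const_of_deriv_eq_zero hs'
    (fun _ ht ↦ (hu.hasDerivAt_wronskian hμ hv ht).differentiableAt.differentiableWithinAt)
    (fun _ ht ↦ (hu.hasDerivAt_wronskian hμ hv ht).deriv) ht₁ ht₂

end IsSolOn

lemma wronskian_cyclic (μ : ℝ → ℝ) (u du v dv w dw : ℝ → ℂ)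
    (t : ℝ) :
    wronskian μ u du v dv t * w t + wronskian μ v dv w dw t * u t
      + wronskian μ w dw u du t * v t = 0 := by
  simp only [wronskian]
  ring

lemma hasDerivAt_div_eq_zero {u du v dv : ℝ → ℂ} {t : ℝ} (hu : HasDerivAt u (du t) t)
    (hv : HasDerivAt v (dv t) t) (hu0 : u t ≠ 0) (hW : u t * dv t - du t * v t = 0) :
    HasDerivAt (fun t ↦ v t / u t) 0 t :=
  (hv.div hu hu0).congr_deriv (by rw [div_eq_zero_iff]; left; linear_combination hW)

lemma eventually_eq_zero_of_wronskian_eq_zero {u du v dv : ℝ → ℂ}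
    (h : ∀ᶠ t in 𝓝[>] (0 : ℝ), HasDerivAt u (du t) t ∧ HasDerivAt v (dv t) t ∧ u t ≠ 0 ∧
      u t * dv t - du t * v t = 0)
    (hlim : Tendsto (fun t ↦ v t / u t) (𝓝[>] 0) (𝓝 0)) :
    ∀ᶠ t in 𝓝[>] 0, v t = 0 := by
  obtain ⟨E, hE, hsub⟩ := mem_nhdsGT_iff_exists_Ioo_subset.1 h
  have hderiv : ∀ t ∈ Ioo 0 E, HasDerivAt (fun t ↦ v t / u t) 0 t := fun t ht ↦
    have ⟨hu, hv, hu0, hW⟩ := hsub ht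
    hasDerivAt_div_eq_zero hu hv hu0 hW
  obtain ⟨c, hc⟩ := isOpen_Ioo.exists_is_const_of_deriv_eq_zero isPreconnected_Ioo
    (fun t ht ↦ (hderiv t ht).differentiableAt.differentiableWithinAt)
    (fun t ht ↦ (hderiv t ht).deriv)
  have hc0 : c = 0 := tendsto_nhds_unique (tendsto_const_nhds.congr'
    (eventually_of_mem (Ioo_mem_nhdsGT hE) fun t ht ↦ (hc t ht).symm)) hlim
  filter_upwards [Ioo_mem_nhdsGT hE] with t ht
  have hvu := hc t ht
  rw [hc0, div_eq_zero_iff] at hvu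
  exact hvu.resolve_right (hsub ht).2.2.1

lemma tendsto_norm_of_tendsto_sub {α : Type*} {l : Filter α} {f E : α → ℂ}
    (hE : ∀ a, ‖E a‖ = 1) (h : Tendsto (fun a ↦ f a - E a) l (𝓝 0)) :
    Tendsto (fun a ↦ ‖f a‖) l (𝓝 1) := by
  rw [tendsto_iff_norm_sub_tendsto_zero]
  refine squeeze_zero (fun _ ↦ norm_nonneg _) (fun a ↦ ?_) (by simpa using h.norm)
  rw [Real.norm_eq_abs, ← hE a]
  exact abs_norm_sub_norm_le _ _

lemma coeff_eq_zero_of_tendsto {ι : Type*} {l : Filter ι} [l.NeBot] {f g h : ι → ℂ}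
    {c₁ c₂ c₃ L : ℂ} (hrel : ∀ᶠ k in l, c₁ * f k + c₂ * g k + c₃ * h k = 0)
    (hf : Tendsto f l (𝓝 0)) (hg : Tendsto g l (𝓝 L)) (hh : Tendsto h l (𝓝 0)) (hL : L ≠ 0) :
    c₂ = 0 := by
  have hlim := ((hf.const_mul c₁).add (hg.const_mul c₂)).add (hh.const_mul c₃)
  rw [mul_zero, mul_zero, zero_add, add_zero] at hlim
  exact (mul_eq_zero.1 (tendsto_nhds_unique hlim (tendsto_const_nhds.congr'
    (hrel.mono fun k hk ↦ hk.symm)))).resolve_right hL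

-- Eliminating `y₃` with `ε̇₃ = -(3/2) ε₃²` gives `x'' + airyP x' + airyQ x = 0` in the variable
-- `ε₃`; the substitution `z = -ε₃^{-2/3}` turns it into Airy's equation `w'' = z w`.
noncomputable def airyP (t : ℝ) : ℝ := 5 / (3 * t)

noncomputable def airyQ (t : ℝ) : ℝ := 4 / (9 * t ^ 4)

lemma hasDerivAt_rpow_five_thirds {t : ℝ} (ht : 0 < t) :
    HasDerivAt (fun t ↦ t ^ (5 / 3 : ℝ)) (t ^ (5 / 3 : ℝ) * airyP t) t := by
  refine (Real.hasDerivAt_rpow_const (Or.inl ht.ne')).congr_deriv ?_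
  rw [Real.rpow_sub_one ht.ne', airyP]
  field_simp

lemma hasDerivAt_neg_rpow_neg_two_thirds {t : ℝ} (ht : 0 < t) :
    HasDerivAt (fun t ↦ -t ^ (-2 / 3 : ℝ)) (2 / 3 * t ^ (-2 / 3 : ℝ) / t) t := by
  refine (Real.hasDerivAt_rpow_const (Or.inl ht.ne')).neg.congr_deriv ?_
  rw [Real.rpow_sub_one ht.ne']
  ring

lemma isSolOn_airy_comp {A : ℝ → ℝ} (hA : ContDiff ℝ 2 A)
    (hAODE : ∀ z, deriv (deriv A) z = z * A z) :
    IsSolOn airyP airyQ (Ioi 0) (fun t ↦ (A (-t ^ (-2 / 3 : ℝ)) : ℂ))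
      (fun t ↦ ((2 / 3 * deriv A (-t ^ (-2 / 3 : ℝ)) * (t ^ (-2 / 3 : ℝ) / t) : ℝ) : ℂ)) := by
  intro t ht
  have ht0 : (0 : ℝ) < t := ht
  have hz := hasDerivAt_neg_rpow_neg_two_thirds ht0
  have hA₁ : Differentiable ℝ A := hA.differentiable (by norm_num)
  have hA₂ : Differentiable ℝ (deriv A) :=
    (hA.iterate_deriv' 1 1).differentiable (by norm_num)
  have hz3 : (t ^ (-2 / 3 : ℝ)) ^ 3 * t ^ 2 = 1 := by
    rw [← Real.rpow_mul_natCast ht0.le, ← Real.rpow_natCast, ← Real.rpow_add ht0]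
    norm_num
  constructor
  · exact ((hA₁ _).hasDerivAt.comp t hz).ofReal_comp.congr_deriv (by push_cast; ring)
  · have hdz : HasDerivAt (fun t ↦ t ^ (-2 / 3 : ℝ) / t)
        (-(5 / 3) * t ^ (-2 / 3 : ℝ) / t ^ 2) t := by
      refine ((Real.hasDerivAt_rpow_const (p := -2 / 3) (Or.inl ht0.ne')).div
        (hasDerivAt_id' t) ht0.ne').congr_deriv ?_
      rw [Real.rpow_sub_one ht0.ne']
      field_simp
      ring
    refine ((((hA₂ _).hasDerivAt.comp t hz).const_mul (2 / 3)).mul hdz).ofReal_comp.congr_deriv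
      ?_
    have key : 2 / 3 * (deriv (deriv A) (-t ^ (-2 / 3 : ℝ)) * (2 / 3 * t ^ (-2 / 3 : ℝ) / t))
          * (t ^ (-2 / 3 : ℝ) / t)
        + 2 / 3 * deriv A (-t ^ (-2 / 3 : ℝ)) * (-(5 / 3) * t ^ (-2 / 3 : ℝ) / t ^ 2)
        = -(airyP t * (2 / 3 * deriv A (-t ^ (-2 / 3 : ℝ)) * (t ^ (-2 / 3 : ℝ) / t))
          + airyQ t * A (-t ^ (-2 / 3 : ℝ))) := by
      rw [hAODE, airyP, airyQ]
      generalize t ^ (-2 / 3 : ℝ) = z at hz3 ⊢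
      field_simp
      linear_combination (-36 * A (-z)) * hz3
    simp only [Function.comp_apply]
    exact_mod_cast key

lemma isSolOn_of_system {x : ℝ → ℂ} {ε₀ : ℝ} (hx : ContDiffOn ℝ 2 x (Ioo 0 ε₀))
    (hODE : ∀ e ∈ Ioo (0 : ℝ) ε₀,
      -(3/2 : ℂ) * (e:ℂ) ^ 2 * deriv (fun s : ℝ => -(3/2 : ℂ) * (s:ℂ) ^ 2 * deriv x s) e
        = -x e - (1/2 : ℂ) * (e:ℂ) * (-(3/2 : ℂ) * (e:ℂ) ^ 2 * deriv x e)) :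
    IsSolOn airyP airyQ (Ioo 0 ε₀) x (deriv x) := by
  intro e he
  have hnhds : Ioo 0 ε₀ ∈ 𝓝 e := isOpen_Ioo.mem_nhds he
  have hx₁ : HasDerivAt x (deriv x e) e :=
    ((hx.differentiableOn (by norm_num)).differentiableAt hnhds).hasDerivAt
  have hx' : ContDiffOn ℝ 1 (deriv x) (Ioo 0 ε₀) := hx.deriv_of_isOpen isOpen_Ioo (by norm_num)
  have hx₂ : HasDerivAt (deriv x) (deriv (deriv x) e) e :=
    ((hx'.differentiableOn one_ne_zero).differentiableAt hnhds).hasDerivAt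
  have hsq : HasDerivAt (fun s : ℝ ↦ -(3/2 : ℂ) * (s:ℂ) ^ 2 * deriv x s)
      (-(3/2 : ℂ) * (2 * e) * deriv x e + -(3/2 : ℂ) * (e:ℂ) ^ 2 * deriv (deriv x) e) e := by
    have := ((((hasDerivAt_id e).ofReal_comp).pow 2).const_mul (-(3/2 : ℂ))).mul hx₂
    refine this.congr_deriv ?_
    simp
  have hODE' := hODE e he
  rw [hsq.deriv] at hODE'
  have he0 : (e : ℂ) ≠ 0 := by exact_mod_cast he.1.ne'
  refine ⟨hx₁, hx₂.congr_deriv ?_⟩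
  simp only [airyP, airyQ]
  push_cast
  field_simp
  linear_combination (12 : ℂ) * hODE'

noncomputable def airyPhase (e : ℝ) : ℝ := 2 / (3 * e) - π / 4

lemma eventually_le_rpow_neg_two_thirds (z₀ : ℝ) :
    ∀ᶠ e in 𝓝[>] (0 : ℝ), 0 < e ∧ z₀ ≤ e ^ (-2 / 3 : ℝ) :=
  eventually_mem_nhdsWithin.and
    ((tendsto_rpow_neg_nhdsGT_zero (by norm_num)).eventually_ge_atTop z₀)

lemma tendsto_const_mul_nhdsGT_zero (C : ℝ) :
    Tendsto (fun e : ℝ ↦ C * e) (𝓝[>] 0) (𝓝 0) := by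
  simpa using ((continuous_const_mul C).tendsto 0).mono_left nhdsWithin_le_nhds

lemma abs_mul_one_add_sub_le {f : ℝ → ℝ} (hf : LipschitzWith 1 f) (hf1 : ∀ x, |f x| ≤ 1)
    (θ φ r : ℝ) : |f (θ + φ) * (1 + r) - f θ| ≤ |φ| + |r| := by
  have hlip : |f (θ + φ) - f θ| ≤ |φ| := by
    simpa [Real.dist_eq] using hf.dist_le_mul (θ + φ) θ
  calc |f (θ + φ) * (1 + r) - f θ| = |(f (θ + φ) - f θ) + f (θ + φ) * r| := by ring_nf
    _ ≤ |f (θ + φ) - f θ| + |f (θ + φ)| * |r| := by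
        rw [← abs_mul]; exact abs_add_le _ _
    _ ≤ |φ| + 1 * |r| := by gcongr; exact hf1 _
    _ = |φ| + |r| := by ring

lemma tendsto_airy_comp_div_sub {A f : ℝ → ℝ} {κ C z₀ : ℝ} (hf : LipschitzWith 1 f)
    (hf1 : ∀ x, |f x| ≤ 1) (hκ : κ ≠ 0)
    (hA : ∀ z ≥ z₀, ∃ φ r : ℝ, |φ| ≤ C * z ^ (-(3:ℝ)/2) ∧ |r| ≤ C * z ^ (-(3:ℝ)/2) ∧
      A (-z) = κ * z ^ (-(1:ℝ)/4) * f ((2/3) * z ^ ((3:ℝ)/2) - π/4 + φ) * (1 + r)) :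
    Tendsto (fun e ↦ ((κ⁻¹ : ℝ) : ℂ) * (A (-e ^ (-2 / 3 : ℝ)) : ℂ) / ((e ^ (1 / 6 : ℝ) : ℝ) : ℂ)
      - (f (airyPhase e) : ℂ)) (𝓝[>] 0) (𝓝 0) := by
  refine squeeze_zero_norm' ?_ (tendsto_const_mul_nhdsGT_zero (2 * C))
  filter_upwards [eventually_le_rpow_neg_two_thirds z₀] with e ⟨he, hez⟩
  obtain ⟨φ, r, hφ, hr, hAe⟩ := hA _ hez
  have h₁ : (e ^ (-2 / 3 : ℝ)) ^ (-(3:ℝ)/2) = e := by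
    rw [← Real.rpow_mul he.le]; norm_num
  have h₂ : (e ^ (-2 / 3 : ℝ)) ^ ((3:ℝ)/2) = e⁻¹ := by
    rw [← Real.rpow_mul he.le]; norm_num [Real.rpow_neg_one]
  have h₃ : (e ^ (-2 / 3 : ℝ)) ^ (-(1:ℝ)/4) = e ^ (1 / 6 : ℝ) := by
    rw [← Real.rpow_mul he.le]; norm_num
  rw [h₁] at hφ hr
  rw [h₂, h₃] at hAe
  have hs : e ^ (1 / 6 : ℝ) ≠ 0 := (Real.rpow_pos_of_pos he _).ne'
  have hdiv : κ⁻¹ * A (-e ^ (-2 / 3 : ℝ)) / e ^ (1 / 6 : ℝ)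
      = f (airyPhase e + φ) * (1 + r) := by
    rw [hAe, airyPhase]
    field_simp
  rw [← Complex.ofReal_mul, ← Complex.ofReal_div, ← Complex.ofReal_sub, Complex.norm_real,
    Real.norm_eq_abs, hdiv]
  linarith [abs_mul_one_add_sub_le hf hf1 (airyPhase e) φ r]

lemma tendsto_div_sub_of_norm_le {x amp E : ℝ → ℂ} {C ε₁ : ℝ} (hε₁ : 0 < ε₁)
    (hE : ∀ e, ‖E e‖ = 1) (hamp : ∀ e, 0 < e → amp e ≠ 0)
    (hx : ∀ e ∈ Ioc 0 ε₁, ∃ r : ℂ, ‖r‖ ≤ C * e ∧ x e = amp e * E e * (1 + r)) :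
    Tendsto (fun e ↦ x e / amp e - E e) (𝓝[>] 0) (𝓝 0) := by
  refine squeeze_zero_norm' ?_ (tendsto_const_mul_nhdsGT_zero C)
  filter_upwards [Ioc_mem_nhdsGT hε₁] with e he
  obtain ⟨r, hr, hxe⟩ := hx e he
  have hdiv : x e / amp e = E e * (1 + r) := by
    rw [hxe]; field_simp [hamp e he.1]
  rw [hdiv]
  calc ‖E e * (1 + r) - E e‖ = ‖E e‖ * ‖r‖ := by rw [← norm_mul]; ring_nf
    _ ≤ C * e := by rw [hE, one_mul]; exact hr

noncomputable def peakSeq (c : ℝ) (k : ℕ) : ℝ := 2 / (3 * (2 * π * k + c))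

lemma tendsto_peakSeq {c : ℝ} (hc : 0 < c) : Tendsto (peakSeq c) atTop (𝓝[>] 0) := by
  have hden : Tendsto (fun k : ℕ ↦ 3 * (2 * π * k + c)) atTop atTop :=
    Tendsto.const_mul_atTop (by norm_num) (tendsto_atTop_add_const_right _ c
      (tendsto_natCast_atTop_atTop.const_mul_atTop (by positivity)))
  refine tendsto_nhdsWithin_iff.2 ⟨tendsto_const_nhds.div_atTop hden, ?_⟩
  exact Eventually.of_forall fun k ↦ show 0 < peakSeq c k by unfold peakSeq; positivity

lemma airyPhase_peakSeq {c : ℝ} (hc : 0 < c) (k : ℕ) :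
    airyPhase (peakSeq c k) = (c - π / 4) + k * (2 * π) := by
  have : 2 * π * k + c ≠ 0 := by positivity
  unfold airyPhase peakSeq
  field_simp
  ring

lemma tendsto_comp_peakSeq {f g : ℝ → ℂ} {c : ℝ} (hc : 0 < c) (hg : Function.Periodic g (2 * π))
    (hf : Tendsto (fun e ↦ f e - g (airyPhase e)) (𝓝[>] 0) (𝓝 0)) :
    Tendsto (fun k ↦ f (peakSeq c k)) atTop (𝓝 (g (c - π / 4))) := by
  have h := (hf.comp (tendsto_peakSeq hc)).add_const (g (c - π / 4))
  rw [zero_add] at h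
  refine h.congr fun k ↦ ?_
  simp [airyPhase_peakSeq hc, hg.nat_mul k (c - π / 4)]

section

variable {p q μ : ℝ → ℝ} {ε₀ : ℝ} {amp a da b db : ℝ → ℂ}

lemma wronskian_eq_zero_of_peaks {X dX : ℝ → ℂ} (hε₀ : 0 < ε₀)
    (hμ : ∀ t ∈ Ioo 0 ε₀, HasDerivAt μ (μ t * p t) t)
    (ha : IsSolOn p q (Ioo 0 ε₀) a da) (hb : IsSolOn p q (Ioo 0 ε₀) b db)
    (hX : IsSolOn p q (Ioo 0 ε₀) X dX)
    (ha' : Tendsto (fun e ↦ a e / amp e - Real.cos (airyPhase e)) (𝓝[>] 0) (𝓝 0))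
    (hb' : Tendsto (fun e ↦ b e / amp e - Real.sin (airyPhase e)) (𝓝[>] 0) (𝓝 0))
    (hX' : Tendsto (fun e ↦ X e / amp e) (𝓝[>] 0) (𝓝 0)) {t : ℝ} (ht : t ∈ Ioo 0 ε₀) :
    wronskian μ b db X dX t = 0 ∧ wronskian μ X dX a da t = 0 := by
  have hW {u du v dv : ℝ → ℂ} (hu : IsSolOn p q (Ioo 0 ε₀) u du)
      (hv : IsSolOn p q (Ioo 0 ε₀) v dv) {e : ℝ} (he : e ∈ Ioo 0 ε₀) :
      wronskian μ u du v dv e = wronskian μ u du v dv t :=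
    hu.wronskian_eq isOpen_Ioo isPreconnected_Ioo hμ hv he ht
  have hrel : ∀ᶠ e in 𝓝[>] 0, wronskian μ a da b db t * (X e / amp e)
      + wronskian μ b db X dX t * (a e / amp e) + wronskian μ X dX a da t * (b e / amp e) = 0 := by
    filter_upwards [Ioo_mem_nhdsGT hε₀] with e he
    have hcyc := wronskian_cyclic μ a da b db X dX e
    rw [hW ha hb he, hW hb hX he, hW hX ha he] at hcyc
    linear_combination hcyc / amp e
  have hcos : Function.Periodic (fun θ ↦ (Real.cos θ : ℂ)) (2 * π) :=
    Real.cos_periodic.comp ((↑) : ℝ → ℂ)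
  have hsin : Function.Periodic (fun θ ↦ (Real.sin θ : ℂ)) (2 * π) :=
    Real.sin_periodic.comp ((↑) : ℝ → ℂ)
  -- at `peakSeq (π / 4)` the phase is `≡ 0`, at `peakSeq (3 * π / 4)` it is `≡ π / 2`
  have hc₁ : 0 < π / 4 := by positivity
  have hc₂ : 0 < 3 * π / 4 := by positivity
  have hθ₂ : 3 * π / 4 - π / 4 = π / 2 := by ring
  constructor
  · refine coeff_eq_zero_of_tendsto ((tendsto_peakSeq hc₁).eventually hrel)
      (hX'.comp (tendsto_peakSeq hc₁)) (tendsto_comp_peakSeq hc₁ hcos ha') ?_ ?_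
    · simpa using tendsto_comp_peakSeq hc₁ hsin hb'
    · simp
  · have hrel' : ∀ᶠ e in 𝓝[>] 0, wronskian μ a da b db t * (X e / amp e)
        + wronskian μ X dX a da t * (b e / amp e) + wronskian μ b db X dX t * (a e / amp e) = 0 :=
      hrel.mono fun e he ↦ by linear_combination he
    refine coeff_eq_zero_of_tendsto ((tendsto_peakSeq hc₂).eventually hrel')
      (hX'.comp (tendsto_peakSeq hc₂)) (tendsto_comp_peakSeq hc₂ hsin hb') ?_ ?_
    · simpa [hθ₂] using tendsto_comp_peakSeq hc₂ hcos ha'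
    · simp [hθ₂]

theorem eventually_eq_add_I_mul_of_asymp {x dx : ℝ → ℂ} (hε₀ : 0 < ε₀)
    (hμ : ∀ t ∈ Ioo 0 ε₀, HasDerivAt μ (μ t * p t) t) (hμ0 : ∀ t ∈ Ioo 0 ε₀, μ t ≠ 0)
    (ha : IsSolOn p q (Ioo 0 ε₀) a da) (hb : IsSolOn p q (Ioo 0 ε₀) b db)
    (hx : IsSolOn p q (Ioo 0 ε₀) x dx) (hamp : ∀ᶠ e in 𝓝[>] 0, amp e ≠ 0)
    (ha' : Tendsto (fun e ↦ a e / amp e - Real.cos (airyPhase e)) (𝓝[>] 0) (𝓝 0))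
    (hb' : Tendsto (fun e ↦ b e / amp e - Real.sin (airyPhase e)) (𝓝[>] 0) (𝓝 0))
    (hx' : Tendsto (fun e ↦ x e / amp e - Complex.exp (Complex.I * airyPhase e)) (𝓝[>] 0)
      (𝓝 0)) :
    ∀ᶠ e in 𝓝[>] 0, x e = a e + Complex.I * b e := by
  set X : ℝ → ℂ := fun e ↦ x e - (a e + Complex.I * b e)
  set dX : ℝ → ℂ := fun e ↦ dx e - (da e + Complex.I * db e)
  have hX : IsSolOn p q (Ioo 0 ε₀) X dX := hx.sub (ha.add (hb.const_mul Complex.I))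
  have hX' : Tendsto (fun e ↦ X e / amp e) (𝓝[>] 0) (𝓝 0) := by
    have h := (hx'.sub ha').sub (hb'.const_mul Complex.I)
    rw [sub_zero, mul_zero, sub_zero] at h
    refine h.congr fun e ↦ ?_
    rw [mul_comm Complex.I, Complex.exp_mul_I, ← Complex.ofReal_cos, ← Complex.ofReal_sin]
    ring
  have hx'' : Tendsto (fun e ↦ ‖x e / amp e‖) (𝓝[>] 0) (𝓝 1) :=
    tendsto_norm_of_tendsto_sub (fun e ↦ Complex.norm_exp_I_mul_ofReal _) hx'
  have hWx : ∀ t ∈ Ioo 0 ε₀, x t * dX t - dx t * X t = 0 := fun t ht ↦ by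
    obtain ⟨hbX, hXa⟩ := wronskian_eq_zero_of_peaks hε₀ hμ ha hb hX ha' hb' hX' ht
    have hW : wronskian μ X dX x dx t
        = wronskian μ X dX a da t - Complex.I * wronskian μ b db X dX t := by
      simp only [wronskian, X, dX]
      ring
    rw [hXa, hbX, mul_zero, sub_zero] at hW
    rw [wronskian, mul_eq_zero, Complex.ofReal_eq_zero] at hW
    linear_combination -hW.resolve_left (hμ0 t ht)
  have hx0 : ∀ᶠ e in 𝓝[>] 0, x e ≠ 0 :=
    (hx''.eventually (eventually_gt_nhds one_pos)).mono fun e he hxe ↦ by simp [hxe] at he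
  have hXx : Tendsto (fun e ↦ X e / x e) (𝓝[>] 0) (𝓝 0) := by
    rw [tendsto_zero_iff_norm_tendsto_zero]
    have h := hX'.norm.div hx'' one_ne_zero
    rw [norm_zero, zero_div] at h
    refine h.congr' (hamp.mono fun e he ↦ ?_)
    simp only [Pi.div_apply]
    rw [← norm_div, div_div_div_cancel_right₀ he]
  have hsol : ∀ᶠ t in 𝓝[>] 0, HasDerivAt x (dx t) t ∧ HasDerivAt X (dX t) t ∧ x t ≠ 0 ∧
      x t * dX t - dx t * X t = 0 := by
    filter_upwards [Ioo_mem_nhdsGT hε₀, hx0] with t ht hxt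
    exact ⟨(hx t ht).1, (hX t ht).1, hxt, hWx t ht⟩
  filter_upwards [eventually_eq_zero_of_wronskian_eq_zero hsol hXx] with e he
  exact sub_eq_zero.1 he

end

/-- Suppose `x_ℂ(ε₃)` is a complex solution of the second-order
equation obtained from `ẋ = y₃`, `ẏ₃ = -x - (1/2) ε₃ y₃`, `ε̇₃ = -(3/2) ε₃²` (with
`y₃ = -(3/2) ε₃² x'`), satisfying
`x_ℂ(ε₃) = ε₃^{1/6} exp(i(2/(3ε₃) - π/4)) (1 + O(ε₃))` as `ε₃ → 0⁺`.  Then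
`x_ℂ(ε₃) = √π (Ai - iBi)(-ε₃^{-2/3})` for all sufficiently small `ε₃ > 0`, where
`Ai`, `Bi` are the Airy functions (characterized by `w'' = z w` plus the stated
oscillatory asymptotics). -/
theorem stmt_8 (Ai Bi : ℝ → ℝ) (hAi : ContDiff ℝ 2 Ai) (hBi : ContDiff ℝ 2 Bi)
    (hAiODE : ∀ z : ℝ, deriv (deriv Ai) z = z * Ai z)
    (hBiODE : ∀ z : ℝ, deriv (deriv Bi) z = z * Bi z)
    (hAiAsymp : ∃ C > 0, ∃ z₀ > 0, ∀ z ≥ z₀, ∃ φ r : ℝ,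
      |φ| ≤ C * z ^ (-(3:ℝ)/2) ∧ |r| ≤ C * z ^ (-(3:ℝ)/2) ∧
      Ai (-z) = Real.pi ^ (-(1:ℝ)/2) * z ^ (-(1:ℝ)/4)
        * Real.cos ((2/3) * z ^ ((3:ℝ)/2) - Real.pi/4 + φ) * (1 + r))
    (hBiAsymp : ∃ C > 0, ∃ z₀ > 0, ∀ z ≥ z₀, ∃ φ r : ℝ,
      |φ| ≤ C * z ^ (-(3:ℝ)/2) ∧ |r| ≤ C * z ^ (-(3:ℝ)/2) ∧
      Bi (-z) = -(Real.pi ^ (-(1:ℝ)/2)) * z ^ (-(1:ℝ)/4)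
        * Real.sin ((2/3) * z ^ ((3:ℝ)/2) - Real.pi/4 + φ) * (1 + r))
    (xC : ℝ → ℂ) (ε₀ : ℝ) (hε₀ : 0 < ε₀)
    (hxC : ContDiffOn ℝ 2 xC (Set.Ioo 0 ε₀))
    (hODE : ∀ e ∈ Set.Ioo (0:ℝ) ε₀,
      -(3/2 : ℂ) * (e:ℂ) ^ 2 * deriv (fun s : ℝ => -(3/2 : ℂ) * (s:ℂ) ^ 2 * deriv xC s) e
        = -xC e - (1/2 : ℂ) * (e:ℂ) * (-(3/2 : ℂ) * (e:ℂ) ^ 2 * deriv xC e))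
    (hasymp : ∃ C > 0, ∃ ε₁ ∈ Set.Ioc (0:ℝ) ε₀, ∀ e ∈ Set.Ioc (0:ℝ) ε₁, ∃ r : ℂ,
      ‖r‖ ≤ C * e ∧
      xC e = ((e ^ ((1:ℝ)/6) : ℝ) : ℂ)
        * Complex.exp (Complex.I * (((2 / (3*e) : ℝ) : ℂ) - ((Real.pi/4 : ℝ) : ℂ)))
        * (1 + r)) :
    ∃ ε₂ > 0, ∀ e ∈ Set.Ioc (0:ℝ) ε₂,
      xC e = ((Real.sqrt Real.pi : ℝ) : ℂ)
        * (((Ai (-(e ^ (-(2:ℝ)/3))) : ℝ) : ℂ)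
            - Complex.I * ((Bi (-(e ^ (-(2:ℝ)/3))) : ℝ) : ℂ)) := by
  obtain ⟨CA, -, z₀A, -, hAiAsymp⟩ := hAiAsymp
  obtain ⟨CB, -, z₀B, -, hBiAsymp⟩ := hBiAsymp
  obtain ⟨Cx, -, ε₁, hε₁, hasymp⟩ := hasymp
  have hκ : (π ^ (-(1:ℝ)/2))⁻¹ = √π := by
    rw [← Real.rpow_neg pi_pos.le, Real.sqrt_eq_rpow]
    norm_num
  have hκ0 : π ^ (-(1:ℝ)/2) ≠ 0 := (rpow_pos_of_pos pi_pos _).ne'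
  have hA := tendsto_airy_comp_div_sub lipschitzWith_cos abs_cos_le_one hκ0 hAiAsymp
  have hB := tendsto_airy_comp_div_sub lipschitzWith_sin abs_sin_le_one (neg_ne_zero.2 hκ0)
    hBiAsymp
  rw [hκ] at hA
  rw [inv_neg, hκ] at hB
  have hx := tendsto_div_sub_of_norm_le (amp := fun e ↦ ((e ^ (1 / 6 : ℝ) : ℝ) : ℂ))
    (E := fun e ↦ Complex.exp (Complex.I * (((2 / (3 * e) : ℝ) : ℂ) - ((π / 4 : ℝ) : ℂ))))
    hε₁.1 (fun e ↦ by rw [← Complex.ofReal_sub, Complex.norm_exp_I_mul_ofReal])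
    (fun e he ↦ by exact_mod_cast (rpow_pos_of_pos he _).ne') hasymp
  have hev := eventually_eq_add_I_mul_of_asymp hε₀ (μ := fun t ↦ t ^ (5 / 3 : ℝ))
    (fun _ ht ↦ hasDerivAt_rpow_five_thirds ht.1) (fun t ht ↦ (rpow_pos_of_pos ht.1 _).ne')
    (((isSolOn_airy_comp hAi hAiODE).const_mul _).mono Ioo_subset_Ioi_self)
    (((isSolOn_airy_comp hBi hBiODE).const_mul _).mono Ioo_subset_Ioi_self)
    (isSolOn_of_system hxC hODE)
    (eventually_mem_nhdsWithin.mono fun e he ↦ by exact_mod_cast (rpow_pos_of_pos he _).ne')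
    hA hB (hx.congr fun e ↦ by rw [airyPhase, Complex.ofReal_sub])
  obtain ⟨ε₂, hε₂, hsub⟩ := mem_nhdsGT_iff_exists_Ioc_subset.1 hev
  refine ⟨ε₂, hε₂, fun e he ↦ ?_⟩
  rw [hsub he]
  push_cast
  ring
end

section
/- Let Ω = S_θ ∪ B(R) ⊂ ℂ with θ ∈ (0, π), and for ζ > 0 define the norm ‖α‖_ζ = sup_{u∈Ω} |α(u)| (1 + ζ²|u|²) e^{-ζ|u|} on the space G of analytic functions on Ω with finite norm. Then for all α, β ∈ G, the convolution (α ⋆ β)(u) = ∫₀ᵘ α(s)β(u−s) ds satisfies ‖α ⋆ β‖_ζ ≤ (4π/ζ) ‖α‖_ζ ‖β‖_ζ. -/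
/-! Write `x = ζ‖u‖`. Along the segment, which stays in `Ω` because `Ω` is star-shaped about `0`,
the weight bounds give `‖α(tu) β((1-t)u)‖ ≤ Cα Cβ e^x / ((1 + x²t²)(1 + x²(1-t)²))`: the two
exponentials multiply to `e^x` since `t‖u‖ + (1-t)‖u‖ = ‖u‖`, and this cancels the weight `e^{-x}`.
The remaining rational integral is at most `2π / (x (4 + x²))` (partial fractions and
`arctan < π/2`), so multiplying by `‖u‖ (1 + x²)` leaves at most `2π/ζ · Cα Cβ`. -/

open Real Set MeasureTheory

lemma integral_one_div_one_add_sq_mul_sq {x : ℝ} (hx : x ≠ 0) (c : ℝ) :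
    ∫ t in (0:ℝ)..c, 1 / (1 + x ^ 2 * t ^ 2) = arctan (x * c) / x := by
  have h : ∀ t : ℝ, 1 / (1 + x ^ 2 * t ^ 2) = 1 / (1 + (x * t) ^ 2) := fun t => by ring
  simp_rw [h, intervalIntegral.integral_comp_mul_left (fun s : ℝ => 1 / (1 + s ^ 2)) hx,
    integral_one_div_one_add_sq]
  simp [smul_eq_mul, div_eq_inv_mul]

lemma continuous_one_div_one_add_sq_mul_sq (x : ℝ) :
    Continuous fun t : ℝ => 1 / (1 + x ^ 2 * t ^ 2) :=
  continuous_const.div (by fun_prop) fun t => by positivity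

/-- Partial fractions: `1/((1+A)(1+B)) = (1/(1+A) + 1/(1+B)) / (2+A+B)`, and
`t² + (1-t)² ≥ 1/2` bounds the denominator `2+A+B` from below by `(4+x²)/2`. -/
lemma one_div_mul_one_div_le (x t : ℝ) :
    1 / ((1 + x ^ 2 * t ^ 2) * (1 + x ^ 2 * (1 - t) ^ 2))
      ≤ 2 / (4 + x ^ 2) * (1 / (1 + x ^ 2 * t ^ 2) + 1 / (1 + x ^ 2 * (1 - t) ^ 2)) := by
  have hA : 0 < 1 + x ^ 2 * t ^ 2 := by positivity
  have hB : 0 < 1 + x ^ 2 * (1 - t) ^ 2 := by positivity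
  have hsum : 4 + x ^ 2 ≤ 2 * ((1 + x ^ 2 * t ^ 2) + (1 + x ^ 2 * (1 - t) ^ 2)) := by
    nlinarith [mul_nonneg (sq_nonneg x) (sq_nonneg (2 * t - 1))]
  rw [div_add_div _ _ hA.ne' hB.ne', div_mul_div_comm, div_le_div_iff₀ (by positivity)
    (by positivity)]
  nlinarith [mul_pos hA hB]

lemma integral_one_div_mul_one_div_le {x : ℝ} (hx : 0 < x) :
    ∫ t in (0:ℝ)..1, 1 / ((1 + x ^ 2 * t ^ 2) * (1 + x ^ 2 * (1 - t) ^ 2))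
      ≤ 2 * π / (x * (4 + x ^ 2)) := by
  set f : ℝ → ℝ := fun t => 1 / (1 + x ^ 2 * t ^ 2)
  have hf : Continuous f := continuous_one_div_one_add_sq_mul_sq x
  have hf_reflect_cont : Continuous fun t => f (1 - t) := hf.comp (by fun_prop)
  have hf_int : ∫ t in (0:ℝ)..1, f t = arctan x / x := by
    rw [integral_one_div_one_add_sq_mul_sq hx.ne', mul_one]
  have hf_reflect : ∫ t in (0:ℝ)..1, f (1 - t) = arctan x / x := by
    rw [intervalIntegral.integral_comp_sub_left f 1]
    simpa using hf_int
  calc ∫ t in (0:ℝ)..1, 1 / ((1 + x ^ 2 * t ^ 2) * (1 + x ^ 2 * (1 - t) ^ 2))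
      ≤ ∫ t in (0:ℝ)..1, 2 / (4 + x ^ 2) * (f t + f (1 - t)) := by
        refine intervalIntegral.integral_mono_on zero_le_one ?_ ?_
          fun t _ => one_div_mul_one_div_le x t
        · exact (continuous_const.div (by fun_prop) fun t => by positivity).intervalIntegrable _ _
        · exact (continuous_const.mul (hf.add hf_reflect_cont)).intervalIntegrable _ _
    _ = 2 / (4 + x ^ 2) * (2 * arctan x / x) := by
        rw [intervalIntegral.integral_const_mul, intervalIntegral.integral_add
          (hf.intervalIntegrable _ _) (hf_reflect_cont.intervalIntegrable _ _),
          hf_int, hf_reflect]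
        ring
    _ ≤ 2 / (4 + x ^ 2) * (2 * (π / 2) / x) := by
        gcongr
        exact (arctan_lt_pi_div_two x).le
    _ = 2 * π / (x * (4 + x ^ 2)) := by
        field_simp

lemma le_div_of_mul_weight_le {a ζ s C : ℝ} (h : a * (1 + ζ ^ 2 * s ^ 2) * exp (-(ζ * s)) ≤ C) :
    a ≤ C * exp (ζ * s) / (1 + ζ ^ 2 * s ^ 2) := by
  rw [le_div_iff₀ (by positivity), ← mul_inv_le_iff₀ (exp_pos _), ← exp_neg]
  exact h

lemma ofReal_mul_mem_sector_union_ball {θ R t : ℝ} {u : ℂ} (ht : t ∈ Ioc 0 1)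
    (hu : u ∈ {z : ℂ | |Complex.arg z| < θ / 2} ∪ Metric.ball 0 R) :
    (t : ℂ) * u ∈ {z : ℂ | |Complex.arg z| < θ / 2} ∪ Metric.ball 0 R := by
  rcases hu with hu | hu
  · left
    simpa [Complex.arg_real_mul u ht.1] using hu
  · right
    rw [mem_ball_zero_iff, norm_mul, Complex.norm_real, norm_of_nonneg ht.1.le] at *
    nlinarith [norm_nonneg u, ht.2]

section Convolution

variable {Ω : Set ℂ} {α β : ℂ → ℂ} {ζ Cα Cβ : ℝ}

lemma norm_conv_integrand_le (hΩ : ∀ t ∈ Ioc (0:ℝ) 1, ∀ u ∈ Ω, (t : ℂ) * u ∈ Ω)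
    (hCα : ∀ u ∈ Ω, ‖α u‖ * (1 + ζ ^ 2 * ‖u‖ ^ 2) * exp (-(ζ * ‖u‖)) ≤ Cα)
    (hCβ : ∀ u ∈ Ω, ‖β u‖ * (1 + ζ ^ 2 * ‖u‖ ^ 2) * exp (-(ζ * ‖u‖)) ≤ Cβ)
    {u : ℂ} (hu : u ∈ Ω) {t : ℝ} (ht : t ∈ Ioo 0 1) :
    ‖α (t * u) * β ((1 - t) * u)‖
      ≤ Cα * Cβ * exp (ζ * ‖u‖)
        * (1 / ((1 + (ζ * ‖u‖) ^ 2 * t ^ 2) * (1 + (ζ * ‖u‖) ^ 2 * (1 - t) ^ 2))) := by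
  have hs : (1 - t : ℂ) = ((1 - t : ℝ) : ℂ) := by push_cast; ring
  have hnorm_t : ‖(t : ℂ) * u‖ = t * ‖u‖ := by
    rw [norm_mul, Complex.norm_real, norm_of_nonneg ht.1.le]
  have hnorm_s : ‖(1 - t : ℂ) * u‖ = (1 - t) * ‖u‖ := by
    rw [hs, norm_mul, Complex.norm_real, norm_of_nonneg (by linarith [ht.2])]
  have hα := le_div_of_mul_weight_le (hCα _ (hΩ t ⟨ht.1, ht.2.le⟩ u hu))
  have hβ := le_div_of_mul_weight_le
    (hCβ _ (hs ▸ hΩ (1 - t) ⟨by linarith [ht.2], by linarith [ht.1]⟩ u hu))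
  rw [hnorm_t] at hα
  rw [hnorm_s] at hβ
  have hexp : exp (ζ * (t * ‖u‖)) * exp (ζ * ((1 - t) * ‖u‖)) = exp (ζ * ‖u‖) := by
    rw [← exp_add]; ring_nf
  calc ‖α (t * u) * β ((1 - t) * u)‖
      ≤ Cα * exp (ζ * (t * ‖u‖)) / (1 + ζ ^ 2 * (t * ‖u‖) ^ 2)
        * (Cβ * exp (ζ * ((1 - t) * ‖u‖)) / (1 + ζ ^ 2 * ((1 - t) * ‖u‖) ^ 2)) := by
        rw [norm_mul]
        exact mul_le_mul hα hβ (norm_nonneg _) ((norm_nonneg _).trans hα)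
    _ = _ := by
        rw [div_mul_div_comm, mul_mul_mul_comm, hexp]
        field_simp

lemma norm_integral_conv_le (hΩ : ∀ t ∈ Ioc (0:ℝ) 1, ∀ u ∈ Ω, (t : ℂ) * u ∈ Ω)
    (hCα : ∀ u ∈ Ω, ‖α u‖ * (1 + ζ ^ 2 * ‖u‖ ^ 2) * exp (-(ζ * ‖u‖)) ≤ Cα)
    (hCβ : ∀ u ∈ Ω, ‖β u‖ * (1 + ζ ^ 2 * ‖u‖ ^ 2) * exp (-(ζ * ‖u‖)) ≤ Cβ)
    {u : ℂ} (hu : u ∈ Ω) :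
    ‖∫ t in (0:ℝ)..1, α ((t : ℂ) * u) * β ((1 - (t : ℂ)) * u)‖
      ≤ Cα * Cβ * exp (ζ * ‖u‖) * ∫ t in (0:ℝ)..1,
          1 / ((1 + (ζ * ‖u‖) ^ 2 * t ^ 2) * (1 + (ζ * ‖u‖) ^ 2 * (1 - t) ^ 2)) := by
  rw [← intervalIntegral.integral_const_mul]
  refine intervalIntegral.norm_integral_le_of_norm_le zero_le_one ?_
    (Continuous.intervalIntegrable ?_ _ _)
  · filter_upwards [volume.ae_ne 1] with t ht1 ht
    exact norm_conv_integrand_le hΩ hCα hCβ hu ⟨ht.1, lt_of_le_of_ne ht.2 ht1⟩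
  · exact continuous_const.mul (continuous_const.div (by fun_prop) fun t => by positivity)

lemma norm_conv_mul_weight_le (hζ : 0 < ζ) (hΩ : ∀ t ∈ Ioc (0:ℝ) 1, ∀ u ∈ Ω, (t : ℂ) * u ∈ Ω)
    (hCα : ∀ u ∈ Ω, ‖α u‖ * (1 + ζ ^ 2 * ‖u‖ ^ 2) * exp (-(ζ * ‖u‖)) ≤ Cα)
    (hCβ : ∀ u ∈ Ω, ‖β u‖ * (1 + ζ ^ 2 * ‖u‖ ^ 2) * exp (-(ζ * ‖u‖)) ≤ Cβ)
    {u : ℂ} (hu : u ∈ Ω) :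
    ‖u * ∫ t in (0:ℝ)..1, α ((t : ℂ) * u) * β ((1 - (t : ℂ)) * u)‖
        * (1 + ζ ^ 2 * ‖u‖ ^ 2) * exp (-(ζ * ‖u‖))
      ≤ 2 * π / ζ * (Cα * Cβ) := by
  have hC : 0 ≤ Cα * Cβ :=
    mul_nonneg (le_trans (by positivity) (hCα u hu)) (le_trans (by positivity) (hCβ u hu))
  rcases eq_or_ne u 0 with rfl | hu0
  · simpa using mul_nonneg (by positivity : 0 ≤ 2 * π / ζ) hC
  have hx : 0 < ζ * ‖u‖ := mul_pos hζ (norm_pos_iff.mpr hu0)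
  set x := ζ * ‖u‖ with hx_def
  calc ‖u * ∫ t in (0:ℝ)..1, α ((t : ℂ) * u) * β ((1 - (t : ℂ)) * u)‖
        * (1 + ζ ^ 2 * ‖u‖ ^ 2) * exp (-x)
      = ‖u‖ * (1 + x ^ 2) * exp (-x)
          * ‖∫ t in (0:ℝ)..1, α ((t : ℂ) * u) * β ((1 - (t : ℂ)) * u)‖ := by
        rw [norm_mul]; ring
    _ ≤ ‖u‖ * (1 + x ^ 2) * exp (-x) * (Cα * Cβ * exp x * (2 * π / (x * (4 + x ^ 2)))) := by
        gcongr
        exact (norm_integral_conv_le hΩ hCα hCβ hu).trans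
          (by gcongr; exact integral_one_div_mul_one_div_le hx)
    _ = 2 * π / ζ * (Cα * Cβ) * ((1 + x ^ 2) / (4 + x ^ 2)) := by
        rw [exp_neg, hx_def]
        field_simp
    _ ≤ 2 * π / ζ * (Cα * Cβ) :=
        mul_le_of_le_one_right (by positivity) (div_le_one_of_le₀ (by linarith) (by positivity))

end Convolution

theorem stmt_10_general (θ R ζ : ℝ) (hζ : 0 < ζ)
    (Ω : Set ℂ) (hΩ : Ω = {z : ℂ | |Complex.arg z| < θ/2} ∪ Metric.ball 0 R)
    (α β : ℂ → ℂ)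
    (Cα Cβ : ℝ)
    (hCα : ∀ u ∈ Ω, ‖α u‖ * (1 + ζ ^ 2 * ‖u‖ ^ 2) * Real.exp (-(ζ * ‖u‖)) ≤ Cα)
    (hCβ : ∀ u ∈ Ω, ‖β u‖ * (1 + ζ ^ 2 * ‖u‖ ^ 2) * Real.exp (-(ζ * ‖u‖)) ≤ Cβ) :
    ∀ u ∈ Ω,
      ‖u * ∫ t in (0:ℝ)..1, α ((t : ℂ) * u) * β ((1 - (t : ℂ)) * u)‖
          * (1 + ζ ^ 2 * ‖u‖ ^ 2) * Real.exp (-(ζ * ‖u‖))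
        ≤ (4 * Real.pi / ζ) * Cα * Cβ := by
  intro u hu
  subst hΩ
  have hC : 0 ≤ Cα * Cβ :=
    mul_nonneg (le_trans (by positivity) (hCα u hu)) (le_trans (by positivity) (hCβ u hu))
  calc _ ≤ 2 * π / ζ * (Cα * Cβ) :=
        norm_conv_mul_weight_le hζ (fun t ht v hv => ofReal_mul_mem_sector_union_ball ht hv)
          hCα hCβ hu
    _ ≤ 4 * π / ζ * Cα * Cβ := by
        rw [mul_assoc]
        gcongr
        norm_num

/-- On `Ω = S_θ ∪ B(R)` with `θ ∈ (0,π)`, if `α, β` are analytic on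
`Ω` with `‖α‖_ζ ≤ Cα`, `‖β‖_ζ ≤ Cβ` for the weighted norm
`‖α‖_ζ = sup_{u∈Ω} |α(u)| (1 + ζ²|u|²) e^{-ζ|u|}`, then the convolution
`(α ⋆ β)(u) = ∫₀ᵘ α(s) β(u-s) ds` (along the segment from `0` to `u`) satisfies
`‖α ⋆ β‖_ζ ≤ (4π/ζ) ‖α‖_ζ ‖β‖_ζ`. -/
theorem stmt_10 (θ R ζ : ℝ) (hθ : θ ∈ Set.Ioo 0 Real.pi) (hR : 0 < R) (hζ : 0 < ζ)
    (Ω : Set ℂ) (hΩ : Ω = {z : ℂ | |Complex.arg z| < θ/2} ∪ Metric.ball 0 R)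
    (α β : ℂ → ℂ)
    (hα : DifferentiableOn ℂ α Ω) (hβ : DifferentiableOn ℂ β Ω)
    (Cα Cβ : ℝ)
    (hCα : ∀ u ∈ Ω, ‖α u‖ * (1 + ζ ^ 2 * ‖u‖ ^ 2) * Real.exp (-(ζ * ‖u‖)) ≤ Cα)
    (hCβ : ∀ u ∈ Ω, ‖β u‖ * (1 + ζ ^ 2 * ‖u‖ ^ 2) * Real.exp (-(ζ * ‖u‖)) ≤ Cβ) :
    ∀ u ∈ Ω,
      ‖u * ∫ t in (0:ℝ)..1, α ((t : ℂ) * u) * β ((1 - (t : ℂ)) * u)‖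
          * (1 + ζ ^ 2 * ‖u‖ ^ 2) * Real.exp (-(ζ * ‖u‖))
        ≤ (4 * Real.pi / ζ) * Cα * Cβ :=
  stmt_10_general θ R ζ hζ Ω hΩ α β Cα Cβ hCα hCβ
end

section
/- Let T : [0,1]² → ℝ be C^∞, let q, p ∈ ℕ with q ≠ 2 and index I := p − q + 1 ≥ 0, and define Q(r) = ∫_{r²}^1 s^{-q} r^p T(s², s^{-3}r³) d(s²) for r ∈ (0,1]. Then Q(r) = O(r^{min(I+1, p)}) as r → 0⁺. -/
/-!
`T` is bounded, say by `M`, on the compact unit square, and the point `(v, v^{-3/2} r³)` stays in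
that square for `r² ≤ v ≤ 1`. Hence `|Q(r)| ≤ M r^p ∫_{r²}^1 v^{-q/2} dv`, and the last integral is
bounded by `2` when `q ≤ 1` and by `2 r^{2-q}` when `q ≥ 3`.
-/

open Set Real intervalIntegral

lemma integral_rpow_neg_le_of_lt_one {x a : ℝ} (hx : 0 < x) (ha : a < 1) :
    ∫ v in x..1, v ^ (-a) ≤ 1 / (1 - a) := by
  rw [integral_rpow (Or.inr ⟨by linarith, notMem_uIcc_of_lt hx one_pos⟩), one_rpow,
    neg_add_eq_sub]
  gcongr
  linarith [rpow_nonneg hx.le (1 - a)]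

lemma integral_rpow_neg_le_of_one_lt {x a : ℝ} (hx : 0 < x) (ha : 1 < a) :
    ∫ v in x..1, v ^ (-a) ≤ x ^ (1 - a) / (a - 1) := by
  rw [integral_rpow (Or.inr ⟨by linarith, notMem_uIcc_of_lt hx one_pos⟩), one_rpow,
    neg_add_eq_sub, ← neg_div_neg_eq, neg_sub, neg_sub]
  gcongr
  linarith

lemma rpow_neg_three_halves_mul_pow_three_le_one {r v : ℝ} (hr : 0 < r) (hrv : r ^ 2 ≤ v) :
    v ^ (-(3:ℝ) / 2) * r ^ 3 ≤ 1 := by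
  have hv : 0 < v := lt_of_lt_of_le (by positivity) hrv
  have hr3 : r ^ 3 = (r ^ 2) ^ ((3:ℝ) / 2) := by
    rw [← rpow_natCast r 2, ← rpow_mul hr.le]; norm_num
  rw [neg_div, rpow_neg hv.le, hr3]
  exact inv_mul_le_one_of_le₀ (rpow_le_rpow (by positivity) hrv (by norm_num)) (by positivity)

lemma abs_integral_le_integral_rpow_mul {T : ℝ × ℝ → ℝ} {M r a : ℝ} (p : ℕ)
    (hT : ∀ x ∈ Icc (0:ℝ) 1 ×ˢ Icc (0:ℝ) 1, |T x| ≤ M) (hr0 : 0 < r) (hr1 : r ≤ 1) :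
    |∫ v in r ^ 2..1, v ^ a * r ^ p * T (v, v ^ (-(3:ℝ) / 2) * r ^ 3)|
      ≤ (∫ v in r ^ 2..1, v ^ a) * (r ^ p * M) := by
  have hr2 : r ^ 2 ≤ 1 := pow_le_one₀ hr0.le hr1
  rw [← integral_mul_const, ← norm_eq_abs]
  refine norm_integral_le_of_norm_le hr2 (.of_forall fun v ⟨hv0, hv1⟩ => ?_)
    ((intervalIntegrable_rpow (Or.inr (notMem_uIcc_of_lt (by positivity) one_pos))).mul_const _)
  have hv : 0 < v := lt_trans (by positivity) hv0
  have hmem : (v, v ^ (-(3:ℝ) / 2) * r ^ 3) ∈ Icc (0:ℝ) 1 ×ˢ Icc (0:ℝ) 1 :=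
    ⟨⟨hv.le, hv1⟩, by positivity, rpow_neg_three_halves_mul_pow_three_le_one hr0 hv0.le⟩
  rw [norm_mul, norm_mul, norm_of_nonneg (rpow_nonneg hv.le a),
    norm_of_nonneg (pow_nonneg hr0.le p), mul_assoc]
  gcongr
  exact hT _ hmem

lemma pow_mul_integral_rpow_neg_half_le {r : ℝ} {p q : ℕ} (hr0 : 0 < r) (hq : q ≠ 2)
    (hI : q ≤ p + 1) :
    r ^ p * ∫ v in r ^ 2..1, v ^ (-(q:ℝ) / 2) ≤ 2 * r ^ (min (p + 1 - q + 1) p) := by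
  rw [neg_div]
  rcases (by omega : q ≤ 1 ∨ 3 ≤ q) with hq1 | hq3
  · have hq1' : (q:ℝ) ≤ 1 := by exact_mod_cast hq1
    rw [show min (p + 1 - q + 1) p = p by omega, mul_comm 2]
    gcongr
    calc ∫ v in r ^ 2..1, v ^ (-((q:ℝ) / 2)) ≤ 1 / (1 - q / 2) :=
          integral_rpow_neg_le_of_lt_one (by positivity) (by linarith)
      _ ≤ 2 := by rw [div_le_iff₀ (by linarith)]; linarith
  · have hq3' : (3:ℝ) ≤ q := by exact_mod_cast hq3
    have hpow : r ^ p * (r ^ 2) ^ (1 - (q:ℝ) / 2) = r ^ (p + 1 - q + 1) := by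
      rw [← rpow_natCast, ← rpow_natCast, ← rpow_mul hr0.le, ← rpow_add hr0, ← rpow_natCast]
      congr 1
      push_cast [show q ≤ p + 1 by omega]
      ring
    rw [show min (p + 1 - q + 1) p = p + 1 - q + 1 by omega, ← hpow, mul_left_comm]
    gcongr
    calc ∫ v in r ^ 2..1, v ^ (-((q:ℝ) / 2)) ≤ (r ^ 2) ^ (1 - (q:ℝ) / 2) / ((q:ℝ) / 2 - 1) :=
          integral_rpow_neg_le_of_one_lt (by positivity) (by linarith)
      _ ≤ 2 * (r ^ 2) ^ (1 - (q:ℝ) / 2) := by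
          rw [div_le_iff₀ (by linarith)]
          nlinarith [rpow_nonneg (sq_nonneg r) (1 - (q:ℝ) / 2)]

/-- Let `T : [0,1]² → ℝ` be `C^∞`, `q, p ∈ ℕ` with `q ≠ 2` and index
`I := p - q + 1 ≥ 0`, and `Q(r) = ∫_{r²}^1 s^{-q} r^p T(s², s^{-3} r³) d(s²)`
(written in the variable `v = s²`).  Then `Q(r) = O(r^{min(I+1,p)})` as `r → 0⁺`. -/
theorem stmt_13 (T : ℝ × ℝ → ℝ)
    (hT : ContDiffOn ℝ (⊤ : ℕ∞) T (Set.Icc (0:ℝ) 1 ×ˢ Set.Icc (0:ℝ) 1))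
    (q p : ℕ) (hq : q ≠ 2) (hI : q ≤ p + 1) :
    ∃ C > 0, ∃ r₀ > 0, ∀ r ∈ Set.Ioc (0:ℝ) r₀,
      |∫ v in (r^2)..1, v ^ (-(q:ℝ)/2) * r ^ p * T (v, v ^ (-(3:ℝ)/2) * r^3)|
        ≤ C * r ^ (min (p + 1 - q + 1) p) := by
  obtain ⟨M, hM⟩ := (isCompact_Icc.prod isCompact_Icc).exists_bound_of_continuousOn
    hT.continuousOn
  refine ⟨2 * max M 1, by positivity, 1, one_pos, fun r ⟨hr0, hr1⟩ => ?_⟩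
  have hT' : ∀ x ∈ Icc (0:ℝ) 1 ×ˢ Icc (0:ℝ) 1, |T x| ≤ max M 1 :=
    fun x hx => (hM x hx).trans (le_max_left _ _)
  calc _ ≤ (∫ v in r ^ 2..1, v ^ (-(q:ℝ) / 2)) * (r ^ p * max M 1) :=
        abs_integral_le_integral_rpow_mul p hT' hr0 hr1
    _ = (r ^ p * ∫ v in r ^ 2..1, v ^ (-(q:ℝ) / 2)) * max M 1 := by ring
    _ ≤ 2 * r ^ (min (p + 1 - q + 1) p) * max M 1 := by
        gcongr ?_ * _; exact pow_mul_integral_rpow_neg_half_le hr0 hq hI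
    _ = 2 * max M 1 * r ^ (min (p + 1 - q + 1) p) := by ring
end

section
/- Let T : [0,1] → ℝ be C^∞ and q > 0 with q ≠ 3, p ∈ ℕ, and define Q(r) = ∫_{r³}^1 u^{-q} r^p T(u³) d(u³) for r ∈ (0,1]. If the index I := p − q + 1 satisfies I ≥ 1, then Q extends to r = 0 as a C^I function. -/
/-!
Substituting `v = u³` turns `Q` into `r ^ p * ∫_r^1 u ^ m S(u) du` with `m = 2 - q` and
`S(u) = 3 T(u³)`, smooth on `[0, 1]`; its index is `p + m - 1`. On `(0, 1]` the derivative of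
`Q_p` is `p Q_{p-1}(r) - r^(p+m) S(r)`, and `Q_{p-1}` has index one less, so by induction on `p`
the derivative extends to a `C^(k-1)` function on `[0, 1]` and `Q_p` extends to its `C^k`
primitive. The induction starts at `p = 0`, where `Q_0` is itself a primitive of `-r^m S(r)`,
and at index `0` (`p + m = 1`), where `u ^ m ≤ r ^ m` on `[r, 1]` gives `|Q_p(r)| ≤ r sup |S|`,
hence continuity at `0`.
-/

open Set Filter Topology MeasureTheory intervalIntegral

theorem ContinuousOn.exists_continuous_eqOn_Icc {α β : Type*} [LinearOrder α]
    [TopologicalSpace α] [OrderTopology α] [TopologicalSpace β] {a b : α} {f : α → β}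
    (hab : a ≤ b) (hf : ContinuousOn f (Icc a b)) : ∃ g, Continuous g ∧ EqOn g f (Icc a b) :=
  ⟨IccExtend hab ((Icc a b).domRestrict f), continuous_IccExtend_iff.2 hf.domRestrict,
    fun _ hx => IccExtend_of_mem hab _ hx⟩

theorem contDiffOn_integral_Icc {a b : ℝ} (hab : a < b) {g : ℝ → ℝ} {k : ℕ}
    (hg : ContDiffOn ℝ k g (Icc a b)) :
    ContDiffOn ℝ (k + 1) (fun x => ∫ t in x..b, g t) (Icc a b) := by
  obtain ⟨g', hg'c, hg'g⟩ := hg.continuousOn.exists_continuous_eqOn_Icc hab.le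
  have hb : b ∈ Icc a b := right_mem_Icc.2 hab.le
  have hint : EqOn (fun x => ∫ t in x..b, g' t) (fun x => ∫ t in x..b, g t) (Icc a b) :=
    fun x hx => integral_congr fun t ht => hg'g (uIcc_subset_Icc hx hb ht)
  have hderiv (x : ℝ) : HasDerivAt (fun x => ∫ t in x..b, g' t) (-g' x) x :=
    integral_hasDerivAt_left (hg'c.intervalIntegrable _ _)
      hg'c.aestronglyMeasurable.stronglyMeasurableAtFilter hg'c.continuousAt
  refine ContDiffOn.congr ?_ fun x hx => (hint hx).symm
  rw [contDiffOn_succ_iff_derivWithin (uniqueDiffOn_Icc hab)]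
  refine ⟨fun x _ => (hderiv x).differentiableAt.differentiableWithinAt, by simp, ?_⟩
  refine hg.neg.congr fun x hx => ?_
  rw [(hderiv x).hasDerivWithinAt.derivWithin (uniqueDiffOn_Icc hab x hx), hg'g hx]

theorem exists_eqOn_contDiffOn_succ_of_hasDerivAt {a b : ℝ} (hab : a < b) {f g : ℝ → ℝ}
    {k : ℕ} (hg : ContDiffOn ℝ k g (Icc a b)) (hf : ∀ x ∈ Ioc a b, HasDerivAt f (g x) x) :
    ∃ F, EqOn F f (Ioc a b) ∧ ContDiffOn ℝ (k + 1) F (Icc a b) := by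
  refine ⟨fun x => f b - ∫ t in x..b, g t, fun x hx => ?_,
    contDiffOn_const.sub (contDiffOn_integral_Icc hab hg)⟩
  have hsub : uIcc x b ⊆ Ioc a b := by
    rw [uIcc_of_le hx.2]; exact Icc_subset_Ioc hx.1 le_rfl
  show f b - ∫ t in x..b, g t = f x
  rw [integral_eq_sub_of_hasDerivAt (fun y hy => hf y (hsub hy))
    ((hg.continuousOn.mono (hsub.trans Ioc_subset_Icc_self)).intervalIntegrable)]
  ring

noncomputable def weightedTail (S : ℝ → ℝ) (m : ℤ) (p : ℕ) (r : ℝ) : ℝ :=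
  r ^ p * ∫ u in r..1, u ^ m * S u

section WeightedTail

variable {S : ℝ → ℝ} {m : ℤ} {p : ℕ}

theorem hasDerivAt_weightedTail (hS : Continuous S) {r : ℝ} (hr : 0 < r) {n : ℕ}
    (hn : (p : ℤ) + m = n) :
    HasDerivAt (weightedTail S m p) (p * weightedTail S m (p - 1) r - r ^ n * S r) r := by
  have hcont : ContinuousOn (fun u : ℝ => u ^ m * S u) (Ioi 0) := fun u hu =>
    ((continuousAt_zpow₀ u m (Or.inl hu.ne')).mul hS.continuousAt).continuousWithinAt
  have hsub : uIcc r 1 ⊆ Ioi 0 := fun u hu => lt_of_lt_of_le (lt_min hr one_pos) hu.1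
  have hint : HasDerivAt (fun x => ∫ u in x..1, u ^ m * S u) (-(r ^ m * S r)) r :=
    integral_hasDerivAt_left ((hcont.mono hsub).intervalIntegrable)
      (hcont.stronglyMeasurableAtFilter isOpen_Ioi r hr)
      (hcont.continuousAt (Ioi_mem_nhds hr))
  have hpow : r ^ p * r ^ m = r ^ n := by
    rw [← zpow_natCast, ← zpow_add₀ hr.ne', hn, zpow_natCast]
  refine ((hasDerivAt_pow p r).mul hint).congr_deriv ?_
  rw [weightedTail, ← hpow]
  ring

theorem norm_weightedTail_le (hp : 1 ≤ p) (hpm : (p : ℤ) + m = 1) {M : ℝ}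
    (hM : ∀ u ∈ Icc (0 : ℝ) 1, ‖S u‖ ≤ M) {r : ℝ} (hr : r ∈ Icc (0 : ℝ) 1) :
    ‖weightedTail S m p r‖ ≤ M * r := by
  obtain ⟨hr0, hr1⟩ := hr
  rcases hr0.eq_or_lt with rfl | hr0
  · simp [weightedTail, zero_pow (by omega : p ≠ 0)]
  have hM0 : 0 ≤ M := (norm_nonneg _).trans (hM 0 ⟨le_rfl, zero_le_one⟩)
  have hle : ∀ u ∈ uIoc r 1, ‖u ^ m * S u‖ ≤ r ^ m * M := by
    intro u hu
    rw [uIoc_of_le hr1] at hu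
    have hu0 : 0 < u := hr0.trans hu.1
    rw [norm_mul, Real.norm_of_nonneg (zpow_nonneg hu0.le m)]
    refine mul_le_mul ?_ (hM u ⟨hu0.le, hu.2⟩) (norm_nonneg _) (zpow_nonneg hr0.le m)
    have := zpow_le_zpow_left₀ (by omega : (0 : ℤ) ≤ -m) (inv_nonneg.2 hu0.le)
      (inv_anti₀ hr0 hu.1.le)
    rwa [inv_zpow', inv_zpow', neg_neg] at this
  have hpow : r ^ p * r ^ m = r := by
    rw [← zpow_natCast, ← zpow_add₀ hr0.ne', hpm, zpow_one]
  calc ‖weightedTail S m p r‖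
      = r ^ p * ‖∫ u in r..1, u ^ m * S u‖ := by
        rw [weightedTail, norm_mul, Real.norm_of_nonneg (pow_nonneg hr0.le p)]
    _ ≤ r ^ p * (r ^ m * M * |1 - r|) :=
        mul_le_mul_of_nonneg_left (norm_integral_le_of_norm_le_const hle) (by positivity)
    _ ≤ r ^ p * (r ^ m * M) := by
        refine mul_le_mul_of_nonneg_left (mul_le_of_le_one_right (by positivity) ?_)
          (by positivity)
        rw [abs_of_nonneg (by linarith)]
        linarith
    _ = M * r := by rw [← mul_assoc, hpow, mul_comm]

theorem continuousOn_weightedTail_of_add_eq_one (hS : Continuous S) (hp : 1 ≤ p)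
    (hpm : (p : ℤ) + m = 1) : ContinuousOn (weightedTail S m p) (Icc 0 1) := by
  rintro r ⟨hr0, -⟩
  rcases hr0.eq_or_lt with rfl | hr0
  · obtain ⟨M, hM⟩ :=
      isCompact_Icc.exists_bound_of_continuousOn (hS.continuousOn (s := Icc 0 1))
    have hlim : Tendsto (fun r : ℝ => M * r) (𝓝[Icc 0 1] 0) (𝓝 0) :=
      tendsto_nhdsWithin_of_tendsto_nhds (by simpa using (continuous_const_mul M).tendsto 0)
    rw [ContinuousWithinAt, show weightedTail S m p 0 = 0 by
      simp [weightedTail, zero_pow (by omega : p ≠ 0)]]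
    exact squeeze_zero_norm' (eventually_nhdsWithin_of_forall fun r hr =>
      norm_weightedTail_le hp hpm hM hr) hlim
  · exact (hasDerivAt_weightedTail hS hr0 (n := 1) (by simpa using hpm)).continuousAt
      |>.continuousWithinAt

theorem exists_contDiffOn_weightedTail_of_continuous (hS : Continuous S) {k : ℕ}
    (hSk : ContDiffOn ℝ k S (Icc 0 1)) (hpm : (p : ℤ) + m = k + 1) :
    ∃ E, EqOn E (weightedTail S m p) (Ioc 0 1) ∧ ContDiffOn ℝ k E (Icc 0 1) := by
  induction p generalizing k with
  | zero =>
    obtain ⟨E, hE, hEk⟩ := exists_eqOn_contDiffOn_succ_of_hasDerivAt zero_lt_one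
      (g := fun r => -(r ^ (k + 1) * S r)) ((contDiffOn_id.pow (k + 1)).mul hSk).neg fun r hr =>
        (hasDerivAt_weightedTail hS hr.1 (n := k + 1) (by push_cast at hpm ⊢; omega)).congr_deriv
          (by simp)
    exact ⟨E, hE, hEk.of_le (by exact_mod_cast k.le_succ)⟩
  | succ p ih =>
    rcases k with _ | k
    · exact ⟨_, eqOn_refl _ _, contDiffOn_zero.2
        (continuousOn_weightedTail_of_add_eq_one hS (by omega) (by push_cast at hpm ⊢; omega))⟩
    obtain ⟨E, hE, hEk⟩ := ih (hSk.of_le (by exact_mod_cast k.le_succ))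
      (by push_cast at hpm ⊢; omega)
    refine exists_eqOn_contDiffOn_succ_of_hasDerivAt zero_lt_one
      (g := fun r => ((p + 1 : ℕ) : ℝ) * E r - r ^ (k + 2) * S r)
      ((contDiffOn_const.mul hEk).sub ((contDiffOn_id.pow (k + 2)).mul
        (hSk.of_le (by exact_mod_cast k.le_succ)))) fun r hr => ?_
    refine (hasDerivAt_weightedTail hS hr.1 (n := k + 2)
      (by push_cast at hpm ⊢; omega)).congr_deriv ?_
    rw [Nat.add_sub_cancel, hE hr]

theorem exists_contDiffOn_weightedTail {k : ℕ} (hS : ContDiffOn ℝ k S (Icc 0 1))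
    (hpm : (p : ℤ) + m = k + 1) :
    ∃ E, EqOn E (weightedTail S m p) (Ioc 0 1) ∧ ContDiffOn ℝ k E (Icc 0 1) := by
  obtain ⟨S', hS'c, hS'S⟩ := hS.continuousOn.exists_continuous_eqOn_Icc zero_le_one
  obtain ⟨E, hE, hEk⟩ :=
    exists_contDiffOn_weightedTail_of_continuous hS'c (hS.congr fun _ hx => hS'S hx) hpm
  refine ⟨E, fun r hr => (hE hr).trans ?_, hEk⟩
  have hsub : uIcc r 1 ⊆ Icc 0 1 := uIcc_subset_Icc ⟨hr.1.le, hr.2⟩ ⟨zero_le_one, le_rfl⟩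
  simp only [weightedTail]
  rw [integral_congr fun u hu => by rw [hS'S (hsub hu)]]

end WeightedTail

theorem integral_rpow_mul_eq_integral_zpow_mul_comp_cube {T : ℝ → ℝ}
    (hT : ContinuousOn T (Icc 0 1)) (q : ℕ) {r : ℝ} (hr : r ∈ Ioc 0 1) :
    ∫ v in r ^ 3..1, v ^ (-(q : ℝ) / 3) * T v =
      ∫ u in r..1, u ^ ((2 : ℤ) - q) * (3 * T (u ^ 3)) := by
  have hpos : ∀ u ∈ uIcc r 1, 0 < u := fun u hu => lt_of_lt_of_le (lt_min hr.1 one_pos) hu.1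
  have hmaps : ∀ u ∈ uIcc r 1, u ^ 3 ∈ Icc (0 : ℝ) 1 := fun u hu =>
    ⟨pow_nonneg (hpos u hu).le 3, pow_le_one₀ (hpos u hu).le (uIcc_of_le hr.2 ▸ hu).2⟩
  have hg : ContinuousOn (fun v : ℝ => v ^ (-(q : ℝ) / 3) * T v)
      ((fun u : ℝ => u ^ 3) '' uIcc r 1) := by
    rintro _ ⟨u, hu, rfl⟩
    exact (Real.continuousAt_rpow_const _ _ (Or.inl (pow_pos (hpos u hu) 3).ne'))
      |>.continuousWithinAt.mul (hT.mono (image_subset_iff.2 hmaps) _ ⟨u, hu, rfl⟩)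
  have hsubst := integral_comp_mul_deriv' (fun x _ => by simpa using hasDerivAt_pow 3 x)
    (by fun_prop : Continuous fun u : ℝ => 3 * u ^ 2).continuousOn hg
  rw [one_pow] at hsubst
  rw [← hsubst]
  refine integral_congr fun u hu => ?_
  have hu0 := hpos u hu
  have hcube : (u ^ 3) ^ (-(q : ℝ) / 3) = u ^ (-(q : ℤ)) := by
    rw [← Real.rpow_natCast_mul hu0.le, ← Real.rpow_intCast]; push_cast; ring_nf
  have hsplit : u ^ ((2 : ℤ) - q) = u ^ (-(q : ℤ)) * u ^ 2 := by
    rw [sub_eq_neg_add, zpow_add₀ hu0.ne']; rfl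
  simp only [Function.comp, hcube, hsplit]
  ring

theorem stmt_15_general (T : ℝ → ℝ) (hT : ContDiffOn ℝ (⊤ : ℕ∞) T (Set.Icc (0:ℝ) 1))
    (q p : ℕ) (hI : q ≤ p) :
    ∃ Qext : ℝ → ℝ,
      (∀ r ∈ Set.Ioc (0:ℝ) 1,
        Qext r = ∫ v in (r^3)..1, v ^ (-(q:ℝ)/3) * r ^ p * T v) ∧
      ContDiffOn ℝ ((p + 1 - q : ℕ) : ℕ∞) Qext (Set.Icc 0 1) := by
  have hS : ContDiffOn ℝ (p + 1 - q : ℕ) (fun u => 3 * T (u ^ 3)) (Icc 0 1) :=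
    contDiffOn_const.mul ((hT.of_le (WithTop.coe_le_coe.2 le_top)).comp (contDiffOn_id.pow 3)
      fun u hu => ⟨pow_nonneg hu.1 3, pow_le_one₀ hu.1 hu.2⟩)
  obtain ⟨E, hE, hEk⟩ := exists_contDiffOn_weightedTail (m := 2 - q) (p := p) hS (by omega)
  refine ⟨E, fun r hr => ?_, hEk⟩
  rw [hE hr, weightedTail,
    ← integral_rpow_mul_eq_integral_zpow_mul_comp_cube hT.continuousOn q hr,
    ← intervalIntegral.integral_const_mul]
  exact integral_congr fun v _ => by ring

/-- Let `T : [0,1] → ℝ` be `C^∞`, `q > 0`, `q ≠ 3`, `p ∈ ℕ`, and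
`Q(r) = ∫_{r³}^1 u^{-q} r^p T(u³) d(u³)` (variable `v = u³`).  If the index
`I := p - q + 1` satisfies `I ≥ 1`, then `Q` extends to `r = 0` as a `C^I` function. -/
theorem stmt_15 (T : ℝ → ℝ) (hT : ContDiffOn ℝ (⊤ : ℕ∞) T (Set.Icc (0:ℝ) 1))
    (q p : ℕ) (hq0 : 0 < q) (hq : q ≠ 3) (hI : q ≤ p) :
    ∃ Qext : ℝ → ℝ,
      (∀ r ∈ Set.Ioc (0:ℝ) 1,
        Qext r = ∫ v in (r^3)..1, v ^ (-(q:ℝ)/3) * r ^ p * T v) ∧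
      ContDiffOn ℝ ((p + 1 - q : ℕ) : ℕ∞) Qext (Set.Icc 0 1) :=
  stmt_15_general T hT q p hI
end
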